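/- arXiv:math/0611364 — 6 statements merged into one kernel-verified Lean document; each statement's English description precedes it below -/
import Mathlib

section
/- Let M be a von Neumann algebra with a faithful normal tracial state τ and L² norm ‖·‖₂, let p be a projection in M satisfying pMp abelian (p is an abelian projection), and suppose {e_{ij}}_{1≤i,j≤n} (n ≥ 2) is a system of matrix units in M with Σ_i e_{ii} = 1 such that ‖[p, e_{ij}]‖₂ < ε for all i,j. Then ‖p‖₂ ≤ δ(ε) where δ(ε) → 0 as ε → 0; in particular p cannot be a nonzero fixed projection if such matrix units exist for all ε > 0. -/
/-- If `p` is an abelian projection in a von Neumann algebra with faithful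
normal tracial state (with `L²`-norm encoded axiomatically as `N2`), and `{e i j}` is a
system of `n × n` matrix units (`n ≥ 2`) summing to `1` with `‖[p, e i j]‖₂ < ε`, then
`‖p‖₂ ≤ δ ε` for a function `δ` (independent of `ε`, `p` and the matrix units) with
`δ(ε) → 0` as `ε → 0⁺`. -/
theorem stmt2 {A : Type*} [NormedRing A] [StarRing A] (n : ℕ) (hn : 2 ≤ n)
    (N2 : A → ℝ)
    (h_nonneg : ∀ a : A, 0 ≤ N2 a)
    (h_tri : ∀ a b : A, N2 (a + b) ≤ N2 a + N2 b)
    (h_neg : ∀ a : A, N2 (-a) = N2 a)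
    (h_left : ∀ a b : A, N2 (a * b) ≤ ‖a‖ * N2 b)
    (h_right : ∀ a b : A, N2 (a * b) ≤ N2 a * ‖b‖) :
    ∃ δ : ℝ → ℝ, Filter.Tendsto δ (nhdsWithin 0 (Set.Ioi 0)) (nhds 0) ∧
      ∀ ε : ℝ, 0 < ε → ∀ p : A, IsSelfAdjoint p → IsIdempotentElem p → ‖p‖ ≤ 1 →
        (∀ a b : A, Commute (p * a * p) (p * b * p)) →
        ∀ e : Fin n → Fin n → A,
          (∀ i j k l, e i j * e k l = if j = k then e i l else 0) →
          (∀ i j, star (e i j) = e j i) →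
          (∑ i, e i i = 1) →
          (∀ i j, ‖e i j‖ ≤ 1) →
          (∀ i j, N2 (p * e i j - e i j * p) < ε) →
          N2 p ≤ δ ε := by
  refine ⟨fun ε => (n * (3 * n + 1) : ℝ) * ε, ?_, ?_⟩
  · have h : Filter.Tendsto (fun ε : ℝ => (n * (3 * n + 1) : ℝ) * ε) (nhds 0)
        (nhds ((n * (3 * n + 1) : ℝ) * 0)) :=
      (Filter.tendsto_id.const_mul _)
    rw [mul_zero] at h
    exact h.mono_left nhdsWithin_le_nhds
  intro ε hε p hsa hidem hpnorm hcomm e hmul hstar hsum hnorm hce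
  -- basic facts
  have hN0 : N2 (0 : A) = 0 := by
    have h1 := h_left (0 : A) 0
    rw [mul_zero, norm_zero, zero_mul] at h1
    exact le_antisymm h1 (h_nonneg 0)
  have hsub : ∀ a b : A, N2 (a - b) ≤ N2 a + N2 b := by
    intro a b
    have := h_tri a (-b)
    rwa [← sub_eq_add_neg, h_neg] at this
  have hNsum : ∀ (s : Finset (Fin n)) (f : Fin n → A),
      N2 (∑ i ∈ s, f i) ≤ ∑ i ∈ s, N2 (f i) := by
    intro s f
    induction s using Finset.cons_induction with
    | empty => simp [hN0]
    | cons a s ha ih =>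
      rw [Finset.sum_cons, Finset.sum_cons]
      exact (h_tri _ _).trans (by linarith)
  have hpp : ∀ x : A, p * (p * x) = p * x := by
    intro x; rw [← mul_assoc, hidem.eq]
  have hpp' : ∀ x : A, x * p * p = x * p := by
    intro x; rw [mul_assoc, hidem.eq]
  have hnormpe : ∀ i j : Fin n, ‖p * e i j‖ ≤ 1 := by
    intro i j
    calc ‖p * e i j‖ ≤ ‖p‖ * ‖e i j‖ := norm_mul_le _ _
    _ ≤ 1 * 1 := mul_le_mul hpnorm (hnorm i j) (norm_nonneg _) zero_le_one
    _ = 1 := one_mul 1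
  have hnormep : ∀ i j : Fin n, ‖e i j * p‖ ≤ 1 := by
    intro i j
    calc ‖e i j * p‖ ≤ ‖e i j‖ * ‖p‖ := norm_mul_le _ _
    _ ≤ 1 * 1 := mul_le_mul (hnorm i j) hpnorm (norm_nonneg _) zero_le_one
    _ = 1 := one_mul 1
  -- N2 bound for a * c * b with ‖a‖ ≤ 1, ‖b‖ ≤ 1, N2 c ≤ ε
  have hbound : ∀ a c b : A, ‖a‖ ≤ 1 → ‖b‖ ≤ 1 → N2 c < ε → N2 (a * c * b) ≤ ε := by
    intro a c b ha hb hc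
    calc N2 (a * c * b) ≤ N2 (a * c) * ‖b‖ := h_right _ _
      _ ≤ N2 (a * c) * 1 := by
          apply mul_le_mul_of_nonneg_left hb (h_nonneg _)
      _ = N2 (a * c) := mul_one _
      _ ≤ ‖a‖ * N2 c := h_left _ _
      _ ≤ 1 * ε := mul_le_mul ha hc.le (h_nonneg _) zero_le_one
      _ = ε := one_mul ε
  -- key estimate: for pivot k and each i, p e_ii p ≈ p e_kk p
  have key1 : ∀ k i : Fin n, N2 (p * e i i * p - p * e k k * p) ≤ 2 * ε := by
    intro k i
    have h1 : e i k * e k i = e i i := by simpa using hmul i k k i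
    have h2 : e k i * e i k = e k k := by simpa using hmul k i i k
    -- step a
    have ha : p * e i i * p - (p * e i k * p) * (p * e k i * p)
        = (p * e i k) * (e k i * p - p * e k i) * p := by
      rw [← h1]
      simp only [mul_sub, sub_mul, mul_assoc, hpp, hidem.eq]
    have hb : (p * e k i * p) * (p * e i k * p) - p * e k k * p
        = (p * e k i) * (p * e i k - e i k * p) * p := by
      rw [← h2]
      simp only [mul_sub, sub_mul, mul_assoc, hpp, hidem.eq]
    have hcm : (p * e i k * p) * (p * e k i * p) = (p * e k i * p) * (p * e i k * p) :=
      hcomm (e i k) (e k i)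
    have hNa : N2 (p * e i i * p - (p * e i k * p) * (p * e k i * p)) ≤ ε := by
      rw [ha]
      exact hbound _ _ _ (hnormpe i k) hpnorm (by
        have := hce k i
        rwa [← h_neg, neg_sub] at this)
    have hNb : N2 ((p * e k i * p) * (p * e i k * p) - p * e k k * p) ≤ ε := by
      rw [hb]
      exact hbound _ _ _ (hnormpe k i) hpnorm (hce i k)
    rw [hcm] at hNa
    calc N2 (p * e i i * p - p * e k k * p)
        = N2 ((p * e i i * p - (p * e k i * p) * (p * e i k * p))
            + ((p * e k i * p) * (p * e i k * p) - p * e k k * p)) := by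
          rw [sub_add_sub_cancel]
      _ ≤ _ := h_tri _ _
      _ ≤ ε + ε := add_le_add hNa hNb
      _ = 2 * ε := by ring
  -- sum: p = Σ p e_ii p
  have hpsum : ∑ i : Fin n, p * e i i * p = p := by
    rw [← Finset.sum_mul, ← Finset.mul_sum, hsum, mul_one, hidem.eq]
  have key2 : ∀ k : Fin n, N2 (p - (n : ℕ) • (p * e k k * p)) ≤ 2 * n * ε := by
    intro k
    have heq : p - (n : ℕ) • (p * e k k * p)
        = ∑ i : Fin n, (p * e i i * p - p * e k k * p) := by
      rw [Finset.sum_sub_distrib, hpsum, Finset.sum_const, Finset.card_univ, Fintype.card_fin]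
    rw [heq]
    calc N2 _ ≤ ∑ i : Fin n, N2 (p * e i i * p - p * e k k * p) := hNsum _ _
      _ ≤ ∑ _i : Fin n, 2 * ε := Finset.sum_le_sum fun i _ => key1 k i
      _ = 2 * n * ε := by
          rw [Finset.sum_const, Finset.card_univ, Fintype.card_fin]
          push_cast; ring
  -- for j ≠ k : N2 (p * e j j) ≤ (3n+1) ε
  have key3 : ∀ j k : Fin n, j ≠ k → N2 (p * e j j) ≤ (3 * n + 1) * ε := by
    intro j k hjk
    have hjk0 : e j j * e k k = 0 := by simpa [hjk] using hmul j j k k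
    -- e_jj (n • x) e_jj is small
    have hjk0' : ∀ x : A, e j j * (e k k * x) = 0 := by
      intro x; rw [← mul_assoc, hjk0, zero_mul]
    have hx : e j j * ((n : ℕ) • (p * e k k * p)) * e j j
        = (n : ℕ) • (e j j * (p * e k k - e k k * p) * (p * e j j)) := by
      have : e j j * (p * e k k * p) * e j j
          = e j j * (p * e k k - e k k * p) * (p * e j j) := by
        simp only [mul_sub, sub_mul, mul_assoc, hjk0', zero_mul, mul_zero, sub_zero]
      rw [mul_smul_comm, smul_mul_assoc, this]
    have hxb : N2 (e j j * ((n : ℕ) • (p * e k k * p)) * e j j) ≤ n * ε := by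
      rw [hx]
      have hsm : ∀ (m : ℕ) (a : A), N2 (m • a) ≤ m * N2 a := by
        intro m a
        induction m with
        | zero => simp [hN0]
        | succ m ih =>
          rw [succ_nsmul]
          calc N2 (m • a + a) ≤ N2 (m • a) + N2 a := h_tri _ _
            _ ≤ m * N2 a + N2 a := by linarith
            _ = (m + 1 : ℕ) * N2 a := by push_cast; ring
      calc N2 _ ≤ n * N2 (e j j * (p * e k k - e k k * p) * (p * e j j)) := hsm n _
        _ ≤ n * ε := by
            apply mul_le_mul_of_nonneg_left _ (by positivity)
            exact hbound _ _ _ (hnorm j j) (hnormpe j j) (hce k k)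
    -- e_jj p e_jj bound
    have hjpj : N2 (e j j * p * e j j) ≤ 3 * n * ε := by
      have h1 : e j j * p * e j j
          = e j j * (p - (n : ℕ) • (p * e k k * p)) * e j j
            + e j j * ((n : ℕ) • (p * e k k * p)) * e j j := by
        simp only [mul_sub, sub_mul]; abel
      rw [h1]
      have h2 : N2 (e j j * (p - (n : ℕ) • (p * e k k * p)) * e j j) ≤ 2 * n * ε := by
        calc N2 _ ≤ N2 (e j j * (p - (n : ℕ) • (p * e k k * p))) * ‖e j j‖ := h_right _ _
          _ ≤ N2 (e j j * (p - (n : ℕ) • (p * e k k * p))) * 1 :=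
              mul_le_mul_of_nonneg_left (hnorm j j) (h_nonneg _)
          _ = N2 (e j j * (p - (n : ℕ) • (p * e k k * p))) := mul_one _
          _ ≤ ‖e j j‖ * N2 (p - (n : ℕ) • (p * e k k * p)) := h_left _ _
          _ ≤ 1 * (2 * n * ε) := mul_le_mul (hnorm j j) (key2 k) (h_nonneg _) zero_le_one
          _ = 2 * n * ε := one_mul _
      calc N2 _ ≤ _ := h_tri _ _
        _ ≤ 2 * n * ε + n * ε := add_le_add h2 hxb
        _ = 3 * n * ε := by ring
    -- p e_jj ≈ e_jj p e_jj
    have hjj : e j j * e j j = e j j := by simpa using hmul j j j j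
    have h3 : p * e j j - e j j * p * e j j = -((e j j * p - p * e j j) * e j j) := by
      simp only [sub_mul, mul_assoc, hjj]; abel
    have h4 : N2 (p * e j j - e j j * p * e j j) ≤ ε := by
      rw [h3, h_neg]
      have hc' : N2 (e j j * p - p * e j j) < ε := by
        have := hce j j; rwa [← h_neg, neg_sub] at this
      calc N2 _ ≤ N2 (e j j * p - p * e j j) * ‖e j j‖ := h_right _ _
        _ ≤ ε * 1 := mul_le_mul hc'.le (hnorm j j) (norm_nonneg _) hε.le
        _ = ε := mul_one _
    calc N2 (p * e j j)
        = N2 ((p * e j j - e j j * p * e j j) + e j j * p * e j j) := by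
          rw [sub_add_cancel]
      _ ≤ _ := h_tri _ _
      _ ≤ ε + 3 * n * ε := add_le_add h4 hjpj
      _ = (3 * n + 1) * ε := by ring
  -- finish
  have hesum : (∑ j : Fin n, p * e j j) = p := by rw [← Finset.mul_sum, hsum, mul_one]
  have hfin : N2 p ≤ ∑ j : Fin n, N2 (p * e j j) := by
    have h := hNsum Finset.univ fun j => p * e j j
    rwa [hesum] at h
  have k0 : Fin n := ⟨0, by omega⟩
  calc N2 p ≤ ∑ j : Fin n, N2 (p * e j j) := hfin
    _ ≤ ∑ _j : Fin n, (3 * n + 1) * ε := by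
        apply Finset.sum_le_sum
        intro j _
        by_cases hj : j = ⟨0, by omega⟩
        · exact key3 j ⟨1, by omega⟩ (by rw [hj]; exact Fin.ne_of_val_ne (by simp))
        · exact key3 j ⟨0, by omega⟩ hj
    _ = (n * (3 * n + 1) : ℝ) * ε := by
        rw [Finset.sum_const, Finset.card_univ, Fintype.card_fin]
        push_cast; ring
end

section
/- In the n×n complex matrix algebra M_n(ℂ) with mn divisible structure (n = mk for some m ≥ 2, k ≥ 2), the linear span of the set of k-divisible matrices (matrices x such that the commutant of x in M_n(ℂ) contains a unital copy of M_k(ℂ)) is all of M_n(ℂ). -/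
open Matrix
open scoped Kronecker

namespace Stmt4Aux

variable (m k : ℕ)

/-- reindexing map -/
def F (σ : Equiv.Perm (Fin (m * k))) : Fin (m * k) ≃ Fin m × Fin k :=
  σ.trans finProdFinEquiv.symm

abbrev Mn := Matrix (Fin (m * k)) (Fin (m * k)) ℂ

/-- conjugation by a unitary, as a function -/
noncomputable def conj (U : Matrix.unitaryGroup (Fin (m * k)) ℂ) (A : Mn m k) : Mn m k :=
  (U : Mn m k) * A * star (U : Mn m k)

lemma conj_one (U : Matrix.unitaryGroup (Fin (m * k)) ℂ) : conj m k U 1 = 1 := by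
  rw [conj, mul_one, Matrix.mem_unitaryGroup_iff.mp U.2]

lemma conj_mul (U : Matrix.unitaryGroup (Fin (m * k)) ℂ) (A B : Mn m k) :
    conj m k U (A * B) = conj m k U A * conj m k U B := by
  simp only [conj, Matrix.mul_assoc]
  rw [← Matrix.mul_assoc (star (U : Mn m k)), Matrix.mem_unitaryGroup_iff'.mp U.2, one_mul]

lemma conj_add (U : Matrix.unitaryGroup (Fin (m * k)) ℂ) (A B : Mn m k) :
    conj m k U (A + B) = conj m k U A + conj m k U B := by
  simp only [conj]; noncomm_ring

lemma conj_smul (U : Matrix.unitaryGroup (Fin (m * k)) ℂ) (c : ℂ) (A : Mn m k) :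
    conj m k U (c • A) = c • conj m k U A := by
  simp only [conj, Matrix.smul_mul, Matrix.mul_smul]

lemma conj_star (U : Matrix.unitaryGroup (Fin (m * k)) ℂ) (A : Mn m k) :
    conj m k U (star A) = star (conj m k U A) := by
  simp only [conj, StarMul.star_mul, star_star, Matrix.mul_assoc]

lemma star_kron (A : Matrix (Fin m) (Fin m) ℂ) (B : Matrix (Fin k) (Fin k) ℂ) :
    star (A ⊗ₖ B) = star A ⊗ₖ star B := by
  ext ⟨a, i⟩ ⟨b, j⟩
  simp [Matrix.star_eq_conjTranspose, conjTranspose_apply, mul_comm]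

/-- the embedded copy of `M_k`, as a function -/
def emb (σ : Equiv.Perm (Fin (m * k))) (T : Matrix (Fin k) (Fin k) ℂ) : Mn m k :=
  ((1 : Matrix (Fin m) (Fin m) ℂ) ⊗ₖ T).submatrix (F m k σ) (F m k σ)

lemma emb_one (σ : Equiv.Perm (Fin (m * k))) : emb m k σ 1 = 1 := by
  rw [emb, Matrix.one_kronecker_one, Matrix.submatrix_one_equiv]

lemma emb_mul (σ : Equiv.Perm (Fin (m * k))) (S T : Matrix (Fin k) (Fin k) ℂ) :
    emb m k σ (S * T) = emb m k σ S * emb m k σ T := by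
  rw [emb, emb, emb, Matrix.submatrix_mul_equiv, ← Matrix.mul_kronecker_mul, one_mul]

lemma emb_add (σ : Equiv.Perm (Fin (m * k))) (S T : Matrix (Fin k) (Fin k) ℂ) :
    emb m k σ (S + T) = emb m k σ S + emb m k σ T := by
  simp [emb, Matrix.kronecker_add, Matrix.submatrix_add]

lemma emb_smul (σ : Equiv.Perm (Fin (m * k))) (c : ℂ) (T : Matrix (Fin k) (Fin k) ℂ) :
    emb m k σ (c • T) = c • emb m k σ T := by
  simp [emb, Matrix.kronecker_smul, Matrix.submatrix_smul]

lemma emb_star (σ : Equiv.Perm (Fin (m * k))) (T : Matrix (Fin k) (Fin k) ℂ) :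
    emb m k σ (star T) = star (emb m k σ T) := by
  rw [emb, emb, Matrix.star_eq_conjTranspose ((kroneckerMap _ 1 T).submatrix _ _),
    Matrix.conjTranspose_submatrix]
  rw [← Matrix.star_eq_conjTranspose, star_kron, star_one]

/-- embedded copy of `M_m`, as a function -/
def embM (σ : Equiv.Perm (Fin (m * k))) (y : Matrix (Fin m) (Fin m) ℂ) : Mn m k :=
  (y ⊗ₖ (1 : Matrix (Fin k) (Fin k) ℂ)).submatrix (F m k σ) (F m k σ)

lemma emb_commute (σ : Equiv.Perm (Fin (m * k))) (T : Matrix (Fin k) (Fin k) ℂ)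
    (y : Matrix (Fin m) (Fin m) ℂ) : emb m k σ T * embM m k σ y = embM m k σ y * emb m k σ T := by
  rw [emb, embM, Matrix.submatrix_mul_equiv, Matrix.submatrix_mul_equiv,
    ← Matrix.mul_kronecker_mul, ← Matrix.mul_kronecker_mul, one_mul, mul_one, one_mul, mul_one]

noncomputable def phi (σ : Equiv.Perm (Fin (m * k))) (U : Matrix.unitaryGroup (Fin (m * k)) ℂ) :
    Matrix (Fin k) (Fin k) ℂ →⋆ₐ[ℂ] Mn m k where
  toFun T := conj m k U (emb m k σ T)
  map_one' := by show conj m k U (emb m k σ 1) = 1; rw [emb_one, conj_one]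
  map_mul' S T := by
    show conj m k U (emb m k σ (S * T)) = conj m k U (emb m k σ S) * conj m k U (emb m k σ T)
    rw [emb_mul, conj_mul]
  map_zero' := by
    show conj m k U (emb m k σ 0) = 0
    have : (0 : Matrix (Fin k) (Fin k) ℂ) = (0 : ℂ) • 0 := by simp
    rw [this, emb_smul, conj_smul, zero_smul]
  map_add' S T := by
    show conj m k U (emb m k σ (S + T)) = conj m k U (emb m k σ S) + conj m k U (emb m k σ T)
    rw [emb_add, conj_add]
  commutes' c := by
    show conj m k U (emb m k σ _) = _
    simp only [Algebra.algebraMap_eq_smul_one]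
    rw [emb_smul, conj_smul, emb_one, conj_one]
  map_star' T := by
    show conj m k U (emb m k σ (star T)) = star (conj m k U (emb m k σ T))
    rw [emb_star, conj_star]

end Stmt4Aux

namespace Stmt4Aux

variable (m k : ℕ)

/-- the set of k-divisible matrices -/
def Sset : Set (Mn m k) :=
  {x : Matrix (Fin (m * k)) (Fin (m * k)) ℂ |
    ∃ φ : Matrix (Fin k) (Fin k) ℂ →⋆ₐ[ℂ] Matrix (Fin (m * k)) (Fin (m * k)) ℂ,
      ∀ T, Commute (φ T) x}

lemma gen_mem (σ : Equiv.Perm (Fin (m * k))) (U : Matrix.unitaryGroup (Fin (m * k)) ℂ)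
    (y : Matrix (Fin m) (Fin m) ℂ) : conj m k U (embM m k σ y) ∈ Sset m k := by
  refine ⟨phi m k σ U, fun T => ?_⟩
  show phi m k σ U T * conj m k U (embM m k σ y) = conj m k U (embM m k σ y) * phi m k σ U T
  show conj m k U (emb m k σ T) * conj m k U (embM m k σ y)
      = conj m k U (embM m k σ y) * conj m k U (emb m k σ T)
  rw [← conj_mul, ← conj_mul, emb_commute]

lemma embM_diag (σ : Equiv.Perm (Fin (m * k))) (c : Fin m → ℂ) :
    embM m k σ (Matrix.diagonal c) = Matrix.diagonal (fun r => c ((F m k σ r).1)) := by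
  ext r s
  by_cases h : r = s
  · subst h
    simp [embM, Matrix.submatrix_apply, Matrix.kroneckerMap_apply, Matrix.one_apply_eq,
      Matrix.diagonal_apply_eq]
  · have h2 : F m k σ r ≠ F m k σ s := fun hh => h ((F m k σ).injective hh)
    rw [Matrix.diagonal_apply_ne _ h]
    simp only [embM, Matrix.submatrix_apply, Matrix.kroneckerMap_apply]
    by_cases h1 : (F m k σ r).1 = (F m k σ s).1
    · have h3 : (F m k σ r).2 ≠ (F m k σ s).2 := fun h2' => h2 (Prod.ext h1 h2')
      rw [Matrix.one_apply_ne h3, mul_zero]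
    · rw [Matrix.diagonal_apply_ne _ h1, zero_mul]

lemma conj_zero (U : Matrix.unitaryGroup (Fin (m * k)) ℂ) : conj m k U 0 = 0 := by
  simp [conj]

/-- diagonals `d` such that all unitary conjugates of `diagonal d` lie in the span -/
noncomputable def D : Submodule ℂ (Fin (m * k) → ℂ) where
  carrier := {d | ∀ U : Matrix.unitaryGroup (Fin (m * k)) ℂ,
    conj m k U (Matrix.diagonal d) ∈ Submodule.span ℂ (Sset m k)}
  add_mem' := by
    intro a b ha hb U
    have hd : Matrix.diagonal (a + b) = Matrix.diagonal a + Matrix.diagonal b := by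
      simp [Matrix.diagonal_add]
    rw [hd, conj_add]
    exact add_mem (ha U) (hb U)
  zero_mem' := by
    intro U
    have hd : Matrix.diagonal (0 : Fin (m * k) → ℂ) = 0 := Matrix.diagonal_zero
    rw [hd, conj_zero]
    exact zero_mem _
  smul_mem' := by
    intro c a ha U
    have hd : Matrix.diagonal (c • a) = c • Matrix.diagonal a := by
      simp [Matrix.diagonal_smul]
    rw [hd, conj_smul]
    exact Submodule.smul_mem _ _ (ha U)

lemma pull_mem (σ : Equiv.Perm (Fin (m * k))) (c : Fin m → ℂ) :
    (fun r => c ((F m k σ r).1)) ∈ D m k := by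
  intro U
  rw [← embM_diag]
  exact Submodule.subset_span (gen_mem m k σ U (Matrix.diagonal c))

/-- first coordinate -/
def q (r : Fin (m * k)) : Fin m := (finProdFinEquiv.symm r).1

lemma single_sub_mem_of_ne {j l : Fin (m * k)} (h : q m k j ≠ q m k l) :
    (Pi.single j 1 - Pi.single l 1 : Fin (m * k) → ℂ) ∈ D m k := by
  have hjl : j ≠ l := fun hh => h (by rw [hh])
  set c : Fin m → ℂ := Pi.single (q m k j) 1 with hc
  have h1 := pull_mem m k 1 c
  have h2 := pull_mem m k (Equiv.swap j l) c
  have key : (fun r => c ((F m k 1 r).1)) - (fun r => c ((F m k (Equiv.swap j l) r).1))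
      = (Pi.single j 1 - Pi.single l 1 : Fin (m * k) → ℂ) := by
    funext r
    have hF : ∀ (σ : Equiv.Perm (Fin (m * k))) (r), (F m k σ r).1 = q m k (σ r) := by
      intro σ r; rfl
    simp only [Pi.sub_apply, hF, Equiv.Perm.one_apply]
    rcases eq_or_ne r j with rfl | hrj
    · rw [Equiv.swap_apply_left]
      simp [hc, Pi.single_apply, hjl, h.symm]
    · rcases eq_or_ne r l with rfl | hrl
      · rw [Equiv.swap_apply_right]
        simp [hc, Pi.single_apply, hjl.symm, h.symm, h]
      · rw [Equiv.swap_apply_of_ne_of_ne hrj hrl]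
        simp [hc, Pi.single_apply, hrj, hrl]
  rw [← key]
  exact sub_mem h1 h2

lemma single_sub_mem (hm : 2 ≤ m) (hk : 2 ≤ k) (j l : Fin (m * k)) :
    (Pi.single j 1 - Pi.single l 1 : Fin (m * k) → ℂ) ∈ D m k := by
  by_cases h : q m k j = q m k l
  · rcases eq_or_ne j l with rfl | hjl
    · simp only [sub_self]; exact zero_mem _
    · haveI : Nontrivial (Fin m) := Fin.nontrivial_iff_two_le.mpr hm
      obtain ⟨a, ha⟩ := exists_ne (q m k j)
      have hk0 : 0 < k := by omega
      set l' : Fin (m * k) := finProdFinEquiv (a, ⟨0, hk0⟩) with hl'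
      have hql' : q m k l' = a := by
        simp [q, hl', Equiv.symm_apply_apply]
      have e1 : q m k j ≠ q m k l' := by rw [hql']; exact ha.symm
      have e2 : q m k l' ≠ q m k l := by rw [hql', ← h]; exact ha
      have := add_mem (single_sub_mem_of_ne m k e1) (single_sub_mem_of_ne m k e2)
      simpa using this
  · exact single_sub_mem_of_ne m k h

lemma single_mem (hm : 2 ≤ m) (hk : 2 ≤ k) (j : Fin (m * k)) :
    (Pi.single j 1 : Fin (m * k) → ℂ) ∈ D m k := by
  have hone : (fun _ => (1 : ℂ)) ∈ D m k := by
    have := pull_mem m k 1 (fun _ => (1 : ℂ))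
    simpa using this
  have hsum : (∑ l : Fin (m * k), (Pi.single j 1 - Pi.single l 1 : Fin (m * k) → ℂ)) ∈ D m k :=
    Submodule.sum_mem _ (fun l _ => single_sub_mem m k hm hk j l)
  have hadd := add_mem hone hsum
  have hn : ((m * k : ℕ) : ℂ) ≠ 0 := by
    have : 0 < m * k := by positivity
    exact_mod_cast this.ne'
  have hfinal := Submodule.smul_mem (D m k) (((m * k : ℕ) : ℂ))⁻¹ hadd
  have key : (((m * k : ℕ) : ℂ))⁻¹ • ((fun _ => (1 : ℂ))
      + ∑ l : Fin (m * k), (Pi.single j 1 - Pi.single l 1 : Fin (m * k) → ℂ))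
      = (Pi.single j 1 : Fin (m * k) → ℂ) := by
    rw [Finset.sum_sub_distrib, Finset.sum_const, Finset.univ_sum_single (fun _ => (1 : ℂ))]
    rw [Finset.card_univ, Fintype.card_fin]
    rw [add_sub_cancel]
    rw [← Nat.cast_smul_eq_nsmul ℂ, smul_smul, inv_mul_cancel₀ hn, one_smul]
  rw [← key]
  exact hfinal

lemma diag_mem (hm : 2 ≤ m) (hk : 2 ≤ k) (d : Fin (m * k) → ℂ) : d ∈ D m k := by
  have : d = ∑ j, d j • (Pi.single j 1 : Fin (m * k) → ℂ) := by
    funext r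
    simp [Pi.single_apply, Finset.sum_apply, mul_comm]
  rw [this]
  exact Submodule.sum_mem _ (fun j _ => Submodule.smul_mem _ _ (single_mem m k hm hk j))

lemma hermitian_mem (hm : 2 ≤ m) (hk : 2 ≤ k) (A : Mn m k) (hA : A.IsHermitian) :
    A ∈ Submodule.span ℂ (Sset m k) := by
  have := diag_mem m k hm hk (RCLike.ofReal ∘ hA.eigenvalues) hA.eigenvectorUnitary
  rw [conj] at this
  rw [hA.spectral_theorem]
  exact this

end Stmt4Aux

/-- In `M_{mk}(ℂ)` (`m ≥ 2`, `k ≥ 2`), the linear span of the `k`-divisible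
matrices (those commuting with a unital copy of `M_k(ℂ)`) is everything. -/
theorem stmt4 (m k : ℕ) (hm : 2 ≤ m) (hk : 2 ≤ k) :
    Submodule.span ℂ {x : Matrix (Fin (m * k)) (Fin (m * k)) ℂ |
      ∃ φ : Matrix (Fin k) (Fin k) ℂ →⋆ₐ[ℂ] Matrix (Fin (m * k)) (Fin (m * k)) ℂ,
        ∀ T, Commute (φ T) x} = ⊤ := by
  rw [Submodule.eq_top_iff']
  intro x
  show x ∈ Submodule.span ℂ (Stmt4Aux.Sset m k)
  have ha : ((1/2 : ℂ) • (x + xᴴ)).IsHermitian := by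
    show ((1/2 : ℂ) • (x + xᴴ))ᴴ = (1/2 : ℂ) • (x + xᴴ)
    rw [Matrix.conjTranspose_smul, Matrix.conjTranspose_add, Matrix.conjTranspose_conjTranspose]
    have : star (1/2 : ℂ) = (1/2 : ℂ) := by norm_num
    rw [this, add_comm]
  have hb : ((Complex.I/2 : ℂ) • (xᴴ - x)).IsHermitian := by
    show ((Complex.I/2 : ℂ) • (xᴴ - x))ᴴ = (Complex.I/2 : ℂ) • (xᴴ - x)
    rw [Matrix.conjTranspose_smul, Matrix.conjTranspose_sub, Matrix.conjTranspose_conjTranspose]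
    have : star (Complex.I/2 : ℂ) = -(Complex.I/2 : ℂ) := by
      simp [Complex.ext_iff]; norm_num
    rw [this]
    module
  have hx : x = (1/2 : ℂ) • (x + xᴴ) + Complex.I • ((Complex.I/2 : ℂ) • (xᴴ - x)) := by
    rw [smul_smul]
    have : Complex.I * (Complex.I/2) = -(1/2 : ℂ) := by
      rw [mul_div_assoc', Complex.I_mul_I]; norm_num
    rw [this]
    module
  rw [hx]
  exact add_mem (Stmt4Aux.hermitian_mem m k hm hk _ ha)
    (Submodule.smul_mem _ _ (Stmt4Aux.hermitian_mem m k hm hk _ hb))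
end

section
/- Let H be an infinite-dimensional Hilbert space, let k be a compact operator on H, and let y ∈ B(H) be an operator that commutes with a unital copy of B(ℓ²) ('ℵ₀-divisible'). Then ‖y − k‖ ≥ ‖y‖, and consequently ‖y − k‖ ≥ ‖k‖/2. -/
open scoped ComplexConjugate ENNReal
local notation "ℓ²" => lp (fun _ : ℕ => ℂ) 2

noncomputable def mye : ℕ × ℕ ≃ ℕ := Denumerable.eqv (ℕ × ℕ)

noncomputable def Sfun (n : ℕ) (x : ℓ²) : ∀ _ : ℕ, ℂ :=
  fun p => if (mye.symm p).1 = n then x ((mye.symm p).2) else 0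

lemma Sfun_comp (n : ℕ) (x : ℓ²) (j : ℕ) : Sfun n x (mye (n, j)) = x j := by
  simp [Sfun]

lemma Sfun_not_range (n : ℕ) (x : ℓ²) (p : ℕ) (hp : p ∉ Set.range (fun j => mye (n, j))) :
    Sfun n x p = 0 := by
  rw [Sfun, if_neg]
  intro h
  exact hp ⟨(mye.symm p).2, by rw [← h]; simp⟩

lemma Sfun_mem (n : ℕ) (x : ℓ²) : Memℓp (Sfun n x) 2 := by
  apply memℓp_gen
  have hinj : Function.Injective (fun j => mye (n, j)) := fun a b h => by
    simpa using mye.injective h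
  rw [← Function.Injective.summable_iff hinj (fun p hp => by
    simp [Sfun_not_range n x p hp])]
  have := (lp.memℓp x).summable (p := 2) (by norm_num)
  convert this using 2 with j
  simp [Function.comp, Sfun_comp]

noncomputable def Sop (n : ℕ) : ℓ² →L[ℂ] ℓ² :=
  LinearMap.mkContinuous
    { toFun := fun x => ⟨Sfun n x, Sfun_mem n x⟩
      map_add' := fun x y => by
        ext p
        simp only [Sfun, lp.coeFn_add, Pi.add_apply]
        split <;> simp
      map_smul' := fun c x => by
        ext p
        simp only [Sfun, lp.coeFn_smul, Pi.smul_apply, RingHom.id_apply]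
        split <;> simp }
    1 (fun x => by
      rw [one_mul]
      apply lp.norm_le_of_tsum_le (p := 2) (by norm_num) (norm_nonneg x)
      have hx := lp.hasSum_norm (p := 2) (by norm_num) x
      have hinj : Function.Injective (fun j => mye (n, j)) := fun a b h => by
        simpa using mye.injective h
      have h3 : HasSum (fun p => ‖Sfun n x p‖ ^ (2 : ℝ≥0∞).toReal)
          (‖x‖ ^ (2 : ℝ≥0∞).toReal) := by
        rw [← Function.Injective.hasSum_iff hinj (fun p hp => by
          simp only [Sfun_not_range n x p hp, norm_zero]
          rw [Real.zero_rpow (by norm_num)])]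
        convert hx using 2 with j
        simp [Function.comp, Sfun_comp]
      exact le_of_eq h3.tsum_eq)

lemma Sop_coe (n : ℕ) (x : ℓ²) (p : ℕ) : (Sop n x) p = Sfun n x p := rfl

open scoped InnerProductSpace in
lemma inner_Sop (n m : ℕ) (x z : ℓ²) :
    ⟪Sop n x, Sop m z⟫_ℂ = if n = m then ⟪x, z⟫_ℂ else 0 := by
  have h1 : HasSum (fun p => ⟪(Sop n x) p, (Sop m z) p⟫_ℂ) ⟪Sop n x, Sop m z⟫_ℂ :=
    lp.hasSum_inner (𝕜 := ℂ) (Sop n x) (Sop m z)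
  by_cases hnm : n = m
  · subst hnm
    rw [if_pos rfl]
    have h2 : HasSum (fun j => ⟪x j, z j⟫_ℂ) ⟪x, z⟫_ℂ := lp.hasSum_inner (𝕜 := ℂ) x z
    refine h1.unique ?_
    have hinj : Function.Injective (fun j => mye (n, j)) := fun a b h => by
      simpa using mye.injective h
    rw [← Function.Injective.hasSum_iff hinj (fun p hp => by
      simp only [Sop_coe, Sfun_not_range n _ p hp, inner_zero_left])]
    convert h2 using 2 with j
    simp [Function.comp, Sop_coe, Sfun_comp]
  · rw [if_neg hnm]
    refine h1.unique ?_
    convert hasSum_zero with p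
    simp only [Sop_coe, Sfun]
    rcases eq_or_ne ((mye.symm p).1) n with h | h
    · rw [if_pos h, if_neg (fun hm => hnm (h.symm.trans hm))]
      simp
    · rw [if_neg h]
      simp

open scoped InnerProductSpace

lemma star_Sop_mul (n m : ℕ) :
    (star (Sop m)) * Sop n = if n = m then (1 : ℓ² →L[ℂ] ℓ²) else 0 := by
  refine ContinuousLinearMap.ext fun x => ext_inner_right ℂ (fun v => ?_)
  rw [ContinuousLinearMap.mul_apply, ContinuousLinearMap.star_eq_adjoint,
    ContinuousLinearMap.adjoint_inner_left, inner_Sop]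
  split
  · simp
  · simp

private lemma contra_lemma {a b s ε : ℝ} (hs1 : 1 ≤ s) (hε : ε = (a - b) / 8)
    (hεpos : 0 < ε) (e4 : s * (a - ε) - ε < b * s) (hcon : b < a) : False := by
  have hspos : 0 < s := lt_of_lt_of_le one_pos hs1
  have hD : 0 < a - b := by linarith
  have hsD : s * (a - b) ≥ a - b := by nlinarith
  nlinarith

private lemma sq_eq_of_nonneg {a b : ℝ} (ha : 0 ≤ a) (hb : 0 ≤ b) (h : a ^ 2 = b ^ 2) :
    a = b := by
  have : a = Real.sqrt (a ^ 2) := (Real.sqrt_sq ha).symm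
  rw [this, h, Real.sqrt_sq hb]

/-- If `H` is an infinite-dimensional Hilbert space, `k` a compact operator,
and `y` an `ℵ₀`-divisible operator (commuting with a unital copy of `B(ℓ²)`), then
`‖y − k‖ ≥ ‖y‖` and consequently `‖y − k‖ ≥ ‖k‖/2`. -/
theorem stmt7 {H : Type*} [NormedAddCommGroup H] [InnerProductSpace ℂ H] [CompleteSpace H]
    (hinf : ¬ FiniteDimensional ℂ H)
    (k y : H →L[ℂ] H) (hk : IsCompactOperator k)
    (hdiv : ∃ φ : (lp (fun _ : ℕ => ℂ) 2 →L[ℂ] lp (fun _ : ℕ => ℂ) 2) →⋆ₐ[ℂ]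
        (H →L[ℂ] H), ∀ T, Commute (φ T) y) :
    ‖y‖ ≤ ‖y - k‖ ∧ ‖k‖ / 2 ≤ ‖y - k‖ := by
  obtain ⟨φ, hφ⟩ := hdiv
  set v : ℕ → H →L[ℂ] H := fun n => φ (Sop n) with hv
  have hrel : ∀ n m, star (v m) * v n = if n = m then 1 else 0 := by
    intro n m
    rw [hv]
    rw [← map_star, ← map_mul, star_Sop_mul]
    split <;> simp
  have hinner : ∀ n m (u u' : H), ⟪v n u, v m u'⟫_ℂ = if n = m then ⟪u, u'⟫_ℂ else 0 := by
    intro n m u u'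
    have h0 : ⟪(star (v m) * v n) u, u'⟫_ℂ = ⟪v n u, v m u'⟫_ℂ := by
      rw [ContinuousLinearMap.mul_apply, ContinuousLinearMap.star_eq_adjoint,
        ContinuousLinearMap.adjoint_inner_left]
    rw [← h0, hrel]
    split <;> simp
  -- norm of (v A - v B) z
  have hsq : Real.sqrt 2 ^ 2 = 2 := Real.sq_sqrt (by norm_num)
  have hs1 : (1 : ℝ) ≤ Real.sqrt 2 := by
    nlinarith [Real.sqrt_nonneg 2]
  have hw : ∀ (A B : ℕ), A ≠ B → ∀ z : H, ‖(v A - v B) z‖ = Real.sqrt 2 * ‖z‖ := by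
    intro A B hAB z
    apply sq_eq_of_nonneg (norm_nonneg _) (by positivity)
    have hc : ⟪(v A - v B) z, (v A - v B) z⟫_ℂ = ⟪z, z⟫_ℂ + ⟪z, z⟫_ℂ := by
      simp only [ContinuousLinearMap.sub_apply]
      rw [inner_sub_sub_self, hinner, hinner, hinner, hinner]
      rw [if_pos rfl, if_pos rfl, if_neg hAB, if_neg (Ne.symm hAB)]
      ring
    have h1 := inner_self_eq_norm_sq (𝕜 := ℂ) ((v A - v B) z)
    have h2 := inner_self_eq_norm_sq (𝕜 := ℂ) z
    have hr2 : (Real.sqrt 2 * ‖z‖) ^ 2 = 2 * ‖z‖ ^ 2 := by rw [mul_pow, hsq]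
    rw [hr2, ← h1, hc, map_add, h2]
    ring
  -- y commutes with each v n
  have hcomm : ∀ n (z : H), y (v n z) = v n (y z) := by
    intro n z
    have := (hφ (Sop n)).eq
    calc y (v n z) = (y * v n) z := rfl
      _ = (v n * y) z := by rw [← this]
      _ = v n (y z) := rfl
  -- main estimate
  have main : ‖y‖ ≤ ‖y - k‖ := by
    by_contra hcon
    push_neg at hcon
    set ε : ℝ := (‖y‖ - ‖y - k‖) / 8 with hε
    have hεpos : 0 < ε := by simp only [hε]; linarith
    -- choose η
    obtain ⟨η, hη1, hη2⟩ := y.exists_lt_apply_of_lt_opNorm (r := ‖y‖ - ε) (by linarith)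
    set ξ : ℕ → H := fun n => v n η with hξ
    have hξnorm : ∀ n, ‖ξ n‖ = ‖η‖ := by
      intro n
      apply sq_eq_of_nonneg (norm_nonneg _) (norm_nonneg _)
      have hc := hinner n n η η
      rw [if_pos rfl, inner_self_eq_norm_sq_to_K, inner_self_eq_norm_sq_to_K] at hc
      exact_mod_cast hc
    -- compactness: find A ≠ B with ‖k (ξ A) - k (ξ B)‖ < ε
    obtain ⟨K, hK, hKmem⟩ := hk
    obtain ⟨r, hr, hball⟩ := Metric.mem_nhds_iff.mp hKmem
    have hmem : ∀ n, k (((r / 2 : ℝ) : ℂ) • ξ n) ∈ K := by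
      intro n
      apply hball
      rw [Metric.mem_ball, dist_zero_right, norm_smul]
      have h2 : ‖((r / 2 : ℝ) : ℂ)‖ = r / 2 := by
        rw [Complex.norm_real, Real.norm_of_nonneg (by linarith)]
      rw [h2, hξnorm]
      nlinarith [norm_nonneg η, hη1, hr]
    obtain ⟨x₀, -, σ, hσ, hσt⟩ := hK.tendsto_subseq hmem
    have hcauchy := hσt.cauchySeq
    rw [Metric.cauchySeq_iff] at hcauchy
    obtain ⟨N, hN⟩ := hcauchy ((r / 2) * ε) (by positivity)
    have hAB : σ (N + 1) ≠ σ N := Nat.ne_of_gt (hσ (Nat.lt_succ_self N))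
    set A := σ (N + 1)
    set B := σ N
    have hdist := hN (N + 1) (Nat.le_succ N) N le_rfl
    have hkd : ‖k (ξ A) - k (ξ B)‖ < ε := by
      have hd := hdist
      simp only [Function.comp_apply] at hd
      rw [map_smul, map_smul, dist_eq_norm, ← smul_sub, norm_smul, Complex.norm_real,
        Real.norm_of_nonneg (by linarith : (0:ℝ) ≤ r / 2)] at hd
      have hr2 : (0:ℝ) < r / 2 := by linarith
      exact (mul_lt_mul_iff_right₀ hr2).mp hd
    -- assemble
    set u : H := (v A - v B) η with hu
    have hunorm : ‖u‖ = Real.sqrt 2 * ‖η‖ := hw A B hAB η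
    have hyu : y u = (v A - v B) (y η) := by
      simp only [hu, ContinuousLinearMap.sub_apply, map_sub, hcomm]
    have hyunorm : ‖y u‖ = Real.sqrt 2 * ‖y η‖ := by rw [hyu]; exact hw A B hAB (y η)
    have hku : k u = k (ξ A) - k (ξ B) := by
      simp only [hu, ContinuousLinearMap.sub_apply, map_sub, hξ]
    have hlow : ‖y u‖ - ‖k u‖ ≤ ‖(y - k) u‖ := by
      rw [ContinuousLinearMap.sub_apply]
      exact norm_sub_norm_le _ _
    have hup : ‖(y - k) u‖ ≤ ‖y - k‖ * (Real.sqrt 2 * ‖η‖) := by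
      rw [← hunorm]; exact (y - k).le_opNorm u
    have hku' : ‖k u‖ < ε := by rw [hku]; exact hkd
    have hη1' : ‖η‖ ≤ 1 := le_of_lt hη1
    have h0yk : 0 ≤ ‖y - k‖ := norm_nonneg _
    have hspos : (0:ℝ) < Real.sqrt 2 := lt_of_lt_of_le one_pos hs1
    have e2 : ‖y - k‖ * (Real.sqrt 2 * ‖η‖) ≤ ‖y - k‖ * Real.sqrt 2 := by
      apply mul_le_mul_of_nonneg_left _ h0yk
      nlinarith
    have e3 : Real.sqrt 2 * (‖y‖ - ε) < Real.sqrt 2 * ‖y η‖ :=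
      mul_lt_mul_of_pos_left hη2 hspos
    have e4 : Real.sqrt 2 * (‖y‖ - ε) - ε < ‖y - k‖ * Real.sqrt 2 := by linarith
    exact contra_lemma hs1 hε hεpos e4 hcon
  refine ⟨main, ?_⟩
  have : ‖k‖ ≤ ‖y‖ + ‖y - k‖ := by
    have hk' : k = y - (y - k) := by abel
    calc ‖k‖ = ‖y - (y - k)‖ := by rw [← hk']
      _ ≤ ‖y‖ + ‖y - k‖ := norm_sub_le _ _
  linarith
end

section
/- Let q be a projection of rank m in B(ℓ²) and let d be a self-adjoint operator commuting with a unital copy of M_n(ℂ) ('n-divisible') with n > m. Then ‖d − q‖ ≥ 1/2. Moreover this bound is sharp: the n-divisible operator (1/2)·I satisfies ‖(1/2)I − q‖ = 1/2. -/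
open scoped InnerProductSpace

section Aux

variable {A : Type*} [CStarAlgebra A]

lemma commute_cfcHom {a b : A} (ha : IsSelfAdjoint a) (hab : Commute b a)
    (f : C(spectrum ℝ a, ℝ)) : Commute b (cfcHom ha f) := by
  have hcont : Continuous (cfcHom ha (R := ℝ)) := (cfcHom_isClosedEmbedding ha).continuous
  have hclosed : IsClosed {g : C(spectrum ℝ a, ℝ) | Commute b (cfcHom ha g)} :=
    (isClosed_eq (continuous_mul_left b) (continuous_mul_right b)).preimage hcont
  induction f using ContinuousMap.induction_on with
  | const r =>
      have h1 : (ContinuousMap.const (spectrum ℝ a) r) = algebraMap ℝ C(spectrum ℝ a, ℝ) r := by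
        ext x; simp
      rw [h1, AlgHomClass.commutes]
      exact (Algebra.commutes' r b).symm
  | id => rw [cfcHom_id ha]; exact hab
  | star_id => rw [star_trivial, cfcHom_id ha]; exact hab
  | add f g hf hg => rw [map_add]; exact hf.add_right hg
  | mul f g hf hg => rw [map_mul]; exact hf.mul_right hg
  | closure h f =>
      have htop := polynomialFunctions.starClosure_topologicalClosure (𝕜 := ℝ) (spectrum ℝ a)
      have hmem : f ∈ (polynomialFunctions (spectrum ℝ a)).starClosure.topologicalClosure := by
        rw [htop]; trivial
      have hmem' : f ∈ closure ((polynomialFunctions (spectrum ℝ a)).starClosure : Set _) := hmem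
      exact hclosed.closure_subset_iff.mpr h hmem'

lemma commute_cfc {a b : A} (ha : IsSelfAdjoint a) (hab : Commute b a) (f : ℝ → ℝ)
    (hf : ContinuousOn f (spectrum ℝ a)) : Commute b (cfc f a) := by
  rw [cfc_apply f a ha hf]
  exact commute_cfcHom ha hab _

end Aux

section Hilbert

variable {H : Type*} [NormedAddCommGroup H] [InnerProductSpace ℂ H] [CompleteSpace H]

set_option maxHeartbeats 1000000 in
lemma spec_near (q d : H →L[ℂ] H) (hqsa : IsSelfAdjoint q) (hqidem : IsIdempotentElem q)
    {x : ℝ} (hx : x ∈ spectrum ℝ d) : |x| ≤ ‖d - q‖ ∨ |x - 1| ≤ ‖d - q‖ := by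
  by_contra hcon
  push_neg at hcon
  obtain ⟨hx1, hx2⟩ := hcon
  set δ := ‖d - q‖ with hδ
  have hδ0 : 0 ≤ δ := norm_nonneg _
  have hx0 : x ≠ 0 := by intro h; rw [h] at hx1; simp at hx1; linarith
  have hx1' : x ≠ 1 := by intro h; rw [h] at hx2; simp at hx2; linarith
  have h1x : (1 : ℝ) - x ≠ 0 := sub_ne_zero.mpr (Ne.symm hx1')
  set a : ℝ := 1 / (x * (1 - x)) with ha
  set b : ℝ := -(1 / x) with hb
  have hab : a + b = 1 / (1 - x) := by
    rw [ha, hb]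
    field_simp
    ring
  set y : H →L[ℂ] H := a • q + b • 1 with hy
  set M : ℝ := max (1 / |1 - x|) (1 / |x|) with hM
  have hqq : ∀ u : H, q (q u) = q u := fun u => by
    conv_rhs => rw [← hqidem]
    rfl
  have horth : ∀ u : H, ⟪q u, u - q u⟫_ℂ = 0 := by
    intro u
    have h1 : ⟪q u, u - q u⟫_ℂ = ⟪u, q (u - q u)⟫_ℂ := hqsa.isSymmetric u (u - q u)
    have h2 : q (u - q u) = 0 := by rw [map_sub, hqq]; simp
    rw [h1, h2, inner_zero_right]
  have hpyth : ∀ (c₁ c₂ : ℝ) (u : H), ‖c₁ • q u + c₂ • (u - q u)‖ ^ 2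
      = c₁ ^ 2 * ‖q u‖ ^ 2 + c₂ ^ 2 * ‖u - q u‖ ^ 2 := by
    intro c₁ c₂ u
    rw [RCLike.real_smul_eq_coe_smul (K := ℂ) c₁, RCLike.real_smul_eq_coe_smul (K := ℂ) c₂,
      @norm_add_sq ℂ, inner_smul_left, inner_smul_right, horth]
    simp [norm_smul, mul_pow, sq_abs, Real.norm_eq_abs]
  have hynorm : ‖y‖ ≤ M := by
    apply ContinuousLinearMap.opNorm_le_bound _ (le_trans (by positivity) (le_max_left _ _)) _
    intro u
    have hyu : y u = (a + b) • q u + b • (u - q u) := by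
      simp only [hy, ContinuousLinearMap.add_apply, ContinuousLinearMap.smul_apply,
        ContinuousLinearMap.one_apply, smul_sub, add_smul]
      module
    have hu : ‖u‖ ^ 2 = ‖q u‖ ^ 2 + ‖u - q u‖ ^ 2 := by
      have := hpyth 1 1 u
      simpa using this
    have h1 : ‖y u‖ ^ 2 ≤ M ^ 2 * ‖u‖ ^ 2 := by
      rw [hyu, hpyth, hu]
      have hM1 : (a + b) ^ 2 ≤ M ^ 2 := by
        rw [hab]
        have h : |1 / (1 - x)| ≤ M := by
          rw [abs_div, abs_one]; exact le_max_left _ _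
        calc (1 / (1-x)) ^ 2 = |1 / (1-x)| ^ 2 := (sq_abs _).symm
        _ ≤ M ^ 2 := by nlinarith [abs_nonneg (1/(1-x))]
      have hM2 : b ^ 2 ≤ M ^ 2 := by
        have h : |b| ≤ M := by
          rw [hb, abs_neg, abs_div, abs_one]; exact le_max_right _ _
        calc b ^ 2 = |b| ^ 2 := (sq_abs _).symm
        _ ≤ M ^ 2 := by nlinarith [abs_nonneg b]
      nlinarith [sq_nonneg ‖q u‖, sq_nonneg ‖u - q u‖]
    have hMnn : 0 ≤ M := le_trans (by positivity) (le_max_left _ _)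
    nlinarith [norm_nonneg (y u), norm_nonneg u, mul_nonneg hMnn (norm_nonneg u)]
  set e : H →L[ℂ] H := q - x • 1 with he
  have hq2 : q * q = q := hqidem
  have A1 : a + b - x * a = 0 := by rw [ha, hb]; field_simp; ring
  have A2 : -(x * b) = 1 := by rw [hb]; field_simp
  have hye : y * e = 1 := by
    have h : y * e = (a + b - x * a) • q + (-(x * b)) • 1 := by
      simp only [hy, he, add_mul, mul_add, mul_sub, sub_mul, smul_mul_assoc, mul_smul_comm, hq2,
        one_mul, mul_one, smul_smul]
      module
    rw [h, A1, A2]; simp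
  have hey : e * y = 1 := by
    have h : e * y = (a + b - x * a) • q + (-(x * b)) • 1 := by
      simp only [hy, he, add_mul, mul_add, mul_sub, sub_mul, smul_mul_assoc, mul_smul_comm, hq2,
        one_mul, mul_one, smul_smul]
      module
    rw [h, A1, A2]; simp
  have hunit1 : IsUnit e := ⟨⟨e, y, hey, hye⟩, rfl⟩
  set t : H →L[ℂ] H := y * (d - q) with ht
  have htnorm : ‖t‖ < 1 := by
    have h1 : ‖t‖ ≤ M * δ := le_trans (norm_mul_le _ _) (by
      exact mul_le_mul_of_nonneg_right hynorm hδ0)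
    have h2 : M * δ < 1 := by
      rcases max_cases (1 / |1 - x|) (1 / |x|) with ⟨hc, _⟩ | ⟨hc, _⟩ <;> rw [hM, hc]
      · have hpos : 0 < |1 - x| := abs_pos.mpr h1x
        rw [div_mul_eq_mul_div, one_mul, div_lt_one hpos]
        rw [abs_sub_comm] at hpos ⊢
        linarith
      · have hpos : 0 < |x| := abs_pos.mpr hx0
        rw [div_mul_eq_mul_div, one_mul, div_lt_one hpos]
        linarith
    linarith
  have hunit2 : IsUnit (1 + t) := by
    have h2 : IsUnit (1 - -t) := (Units.oneSub (-t) (by rwa [norm_neg])).isUnit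
    rwa [sub_neg_eq_add] at h2
  have hfact : d - x • 1 = e * (1 + t) := by
    rw [mul_add, mul_one, ht, ← mul_assoc, hey, one_mul, he]
    abel
  have hunit : IsUnit (d - x • 1) := hfact ▸ hunit1.mul hunit2
  rw [spectrum.mem_iff] at hx
  apply hx
  have h3 : algebraMap ℝ (H →L[ℂ] H) x - d = -(d - x • 1) := by
    rw [Algebra.algebraMap_eq_smul_one]; abel
  rw [h3]
  exact hunit.neg

end Hilbert

instance : ContinuousFunctionalCalculus ℝ (lp (fun _ : ℕ => ℂ) 2 →L[ℂ] lp (fun _ : ℕ => ℂ) 2) IsSelfAdjoint :=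
  IsSelfAdjoint.instContinuousFunctionalCalculus

set_option maxHeartbeats 1000000 in
/-- If `q` is a rank-`m` projection on `ℓ²` and `d` is a self-adjoint
`n`-divisible operator (commuting with a unital copy of `M_n(ℂ)`) with `n > m`, then
`‖d − q‖ ≥ 1/2`; moreover the bound is sharp: `(1/2)·I` is `n`-divisible and
`‖(1/2)I − q‖ = 1/2`. -/
theorem stmt10 (m n : ℕ) (hm : 1 ≤ m) (hmn : m < n)
    (q d : lp (fun _ : ℕ => ℂ) 2 →L[ℂ] lp (fun _ : ℕ => ℂ) 2)
    (hqsa : IsSelfAdjoint q) (hqidem : IsIdempotentElem q)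
    (hqfin : FiniteDimensional ℂ (LinearMap.range (q : lp (fun _ : ℕ => ℂ) 2 →ₗ[ℂ] lp (fun _ : ℕ => ℂ) 2)))
    (hqrank : Module.finrank ℂ (LinearMap.range (q : lp (fun _ : ℕ => ℂ) 2 →ₗ[ℂ] lp (fun _ : ℕ => ℂ) 2)) = m)
    (hdsa : IsSelfAdjoint d)
    (hdiv : ∃ φ : Matrix (Fin n) (Fin n) ℂ →⋆ₐ[ℂ]
        (lp (fun _ : ℕ => ℂ) 2 →L[ℂ] lp (fun _ : ℕ => ℂ) 2), ∀ T, Commute (φ T) d) :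
    1 / 2 ≤ ‖d - q‖ ∧
    (∃ φ : Matrix (Fin n) (Fin n) ℂ →⋆ₐ[ℂ]
        (lp (fun _ : ℕ => ℂ) 2 →L[ℂ] lp (fun _ : ℕ => ℂ) 2),
      ∀ T, Commute (φ T) ((1 / 2 : ℂ) • (1 : lp (fun _ : ℕ => ℂ) 2 →L[ℂ] lp (fun _ : ℕ => ℂ) 2))) ∧
    ‖(1 / 2 : ℂ) • (1 : lp (fun _ : ℕ => ℂ) 2 →L[ℂ] lp (fun _ : ℕ => ℂ) 2) - q‖ = 1 / 2 := by
  haveI : Nontrivial (lp (fun _ : ℕ => ℂ) 2) := by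
    refine ⟨⟨lp.single 2 0 (1 : ℂ), 0, fun h => ?_⟩⟩
    have h0 := congrArg (fun v : lp (fun _ : ℕ => ℂ) 2 => (v : ∀ i : ℕ, ℂ) 0) h
    simp only [lp.single_apply_self, lp.coeFn_zero, Pi.zero_apply] at h0
    exact one_ne_zero h0
  obtain ⟨φ, hφ⟩ := hdiv
  -- q is nonzero, hence has norm ≥ 1
  have hq_ne : q ≠ 0 := by
    intro h
    rw [h] at hqrank
    have : (((0 : (lp (fun _ : ℕ => ℂ) 2) →L[ℂ] (lp (fun _ : ℕ => ℂ) 2))) : (lp (fun _ : ℕ => ℂ) 2) →ₗ[ℂ] (lp (fun _ : ℕ => ℂ) 2)) = 0 := rfl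
    rw [this, LinearMap.range_zero] at hqrank
    rw [finrank_bot] at hqrank
    omega
  have hqfix : ∀ u : (lp (fun _ : ℕ => ℂ) 2), q (q u) = q u := fun u => by
    conv_rhs => rw [← hqidem]
    rfl
  have hqnorm1 : 1 ≤ ‖q‖ := by
    obtain ⟨w, hw⟩ : ∃ w, q w ≠ 0 := by
      by_contra hall
      push_neg at hall
      exact hq_ne (ContinuousLinearMap.ext hall)
    have h1 : ‖q (q w)‖ ≤ ‖q‖ * ‖q w‖ := q.le_opNorm _
    rw [hqfix] at h1
    have h2 : 0 < ‖q w‖ := norm_pos_iff.mpr hw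
    nlinarith
  -- Main inequality
  have main : ∀ (d' : (lp (fun _ : ℕ => ℂ) 2) →L[ℂ] (lp (fun _ : ℕ => ℂ) 2)), IsSelfAdjoint d' → (∀ T, Commute (φ T) d') →
      1 / 2 ≤ ‖d' - q‖ := by
    intro d hdsa hφd
    by_contra hlt
    push_neg at hlt
    set δ := ‖d - q‖ with hδ
    have hδ0 : 0 ≤ δ := norm_nonneg _
    have hspec : ∀ x ∈ spectrum ℝ d, |x| ≤ δ ∨ |x - 1| ≤ δ :=
      fun x hx => spec_near q d hqsa hqidem hx
    set f : ℝ → ℝ := fun x => if x < 1/2 then 0 else 1 with hf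
    have hfc : ContinuousOn f (spectrum ℝ d) := by
      intro x hx
      rcases hspec x hx with h | h
      · have hx2 : x < 1/2 := by
          have := le_abs_self x
          linarith
        have hev : ∀ᶠ y in nhds x, f y = 0 := by
          filter_upwards [Iio_mem_nhds hx2] with y hy
          rw [Set.mem_Iio] at hy
          simp only [hf, if_pos hy]
        exact (Filter.EventuallyEq.continuousAt (by filter_upwards [hev] with y hy using hy)
          ).continuousWithinAt
      · have hx2 : 1/2 < x := by
          have := le_abs_self (1 - x)
          rw [abs_sub_comm] at this
          linarith
        have hev : ∀ᶠ y in nhds x, f y = 1 := by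
          filter_upwards [Ioi_mem_nhds hx2] with y hy
          rw [Set.mem_Ioi] at hy
          simp only [hf, if_neg (not_lt.mpr hy.le)]
        exact (Filter.EventuallyEq.continuousAt (by filter_upwards [hev] with y hy using hy)
          ).continuousWithinAt
    set p : (lp (fun _ : ℕ => ℂ) 2) →L[ℂ] (lp (fun _ : ℕ => ℂ) 2) := cfc f d with hp
    have hp_sa : IsSelfAdjoint p := cfc_predicate f d
    have hff : ∀ x : ℝ, f x * f x = f x := by
      intro x
      simp only [hf]
      split <;> ring
    have hp_idem : p * p = p := by
      rw [hp, ← cfc_mul f f d hfc hfc]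
      exact cfc_congr fun x _ => hff x
    have hpcomm : ∀ T, Commute (φ T) p := fun T => commute_cfc hdsa (hφd T) f hfc
    have hpd : ‖p - d‖ ≤ δ := by
      have heq : p - d = cfc (fun x => f x - x) d := by
        rw [cfc_sub f (fun x => x) d hfc (continuousOn_id), cfc_id' ℝ d]
      rw [heq]
      apply norm_cfc_le hδ0
      intro x hx
      rcases hspec x hx with h | h
      · have hx2 : x < 1/2 := by
          have := le_abs_self x
          linarith
        simp only [hf, if_pos hx2]
        rw [Real.norm_eq_abs]
        rw [abs_sub_comm]
        simpa using h
      · have hx2 : ¬ (x < 1/2) := by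
          have := le_abs_self (1 - x)
          rw [abs_sub_comm] at this
          push_neg
          linarith
        simp only [hf, if_neg hx2]
        rw [Real.norm_eq_abs, abs_sub_comm]
        simpa using h
    have hpq : ‖p - q‖ < 1 := by
      calc ‖p - q‖ = ‖(p - d) + (d - q)‖ := by rw [sub_add_sub_cancel]
      _ ≤ ‖p - d‖ + ‖d - q‖ := norm_add_le _ _
      _ < 1 := by rw [← hδ]; linarith
    have hp_ne : p ≠ 0 := by
      intro h
      rw [h, zero_sub, norm_neg] at hpq
      linarith
    -- matrix units
    set E : Fin n → Fin n → Matrix (Fin n) (Fin n) ℂ :=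
      fun i j => Matrix.single i j 1 with hE
    have hEsum : ∑ i, E i i = 1 := by
      ext a b
      rw [Matrix.sum_apply]
      by_cases hab : a = b
      · subst hab
        rw [Finset.sum_eq_single a (fun c _ hc => by
            simp [hE, Matrix.single, Matrix.of_apply, hc]) (by simp)]
        simp [hE, Matrix.single, Matrix.one_apply]
      · rw [Finset.sum_eq_zero (fun c _ => by
          simp only [hE, Matrix.single, Matrix.of_apply]
          by_cases h1 : c = a
          · subst h1; simp [Ne.symm hab, hab]
          · simp [h1])]
        simp [Matrix.one_apply, hab]
    obtain ⟨ζ, hζ⟩ : ∃ ζ, p ζ ≠ 0 := by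
      by_contra hall
      push_neg at hall
      exact hp_ne (ContinuousLinearMap.ext hall)
    set ξ₀ : (lp (fun _ : ℕ => ℂ) 2) := p ζ with hξ₀
    have hpξ₀ : p ξ₀ = ξ₀ := by
      have := congrArg (fun g : (lp (fun _ : ℕ => ℂ) 2) →L[ℂ] (lp (fun _ : ℕ => ℂ) 2) => g ζ) hp_idem
      simpa [ContinuousLinearMap.mul_apply] using this
    obtain ⟨i, hi⟩ : ∃ i : Fin n, φ (E i i) ξ₀ ≠ 0 := by
      by_contra hall
      push_neg at hall
      have h1 : (∑ i, φ (E i i)) ξ₀ = 0 := by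
        rw [ContinuousLinearMap.sum_apply]
        exact Finset.sum_eq_zero fun i _ => hall i
      rw [← map_sum, hEsum, map_one, ContinuousLinearMap.one_apply] at h1
      exact hζ h1
    set η : Fin n → (lp (fun _ : ℕ => ℂ) 2) := fun j => φ (E j i) ξ₀ with hη
    have hEi : ∀ k j : Fin n, φ (E i k) (η j) = if j = k then φ (E i i) ξ₀ else 0 := by
      intro k j
      have h1 : φ (E i k) (η j) = φ (E i k * E j i) ξ₀ := by
        rw [map_mul]; rfl
      rw [h1]
      by_cases hkj : j = k
      · subst hkj
        rw [if_pos rfl]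
        have h2 : E i j * E j i = E i i := by
          simp only [hE]
          rw [Matrix.single_mul_single_same]
          norm_num
        rw [h2]
      · rw [if_neg hkj]
        have h2 : E i k * E j i = 0 := by
          simp only [hE]
          exact Matrix.single_mul_single_of_ne 1 i k j (fun h => hkj h.symm) 1
        rw [h2, map_zero, ContinuousLinearMap.zero_apply]
    have hlin : LinearIndependent ℂ η := by
      rw [Fintype.linearIndependent_iff]
      intro g hg k
      have h1 := congrArg (fun v => φ (E i k) v) hg
      simp only [map_sum, map_smul, map_zero] at h1
      rw [Finset.sum_congr rfl (fun j _ => by rw [hEi k j, smul_ite, smul_zero])] at h1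
      rw [Finset.sum_ite_eq' (Finset.univ : Finset (Fin n)) k
        (fun j => g j • φ (E i i) ξ₀)] at h1
      simp only [Finset.mem_univ, if_true] at h1
      rcases smul_eq_zero.mp h1 with h | h
      · exact h
      · exact absurd h hi
    have hpη : ∀ j, p (η j) = η j := by
      intro j
      have h1 : p (η j) = (p * φ (E j i)) ξ₀ := rfl
      rw [h1, ← (hpcomm (E j i)).eq]
      show φ (E j i) (p ξ₀) = η j
      rw [hpξ₀]
    -- the span of η has dimension n, bigger than rank of q
    set V : Submodule ℂ (lp (fun _ : ℕ => ℂ) 2) := Submodule.span ℂ (Set.range η) with hV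
    haveI : FiniteDimensional ℂ V := FiniteDimensional.span_of_finite ℂ (Set.finite_range η)
    have hVdim : Module.finrank ℂ V = n := by
      rw [hV, finrank_span_eq_card hlin, Fintype.card_fin]
    set g : V →ₗ[ℂ] LinearMap.range (q : (lp (fun _ : ℕ => ℂ) 2) →ₗ[ℂ] (lp (fun _ : ℕ => ℂ) 2)) :=
      LinearMap.codRestrict _ ((q : (lp (fun _ : ℕ => ℂ) 2) →ₗ[ℂ] (lp (fun _ : ℕ => ℂ) 2)).comp V.subtype)
        (fun v => LinearMap.mem_range_self _ _) with hg
    have hginj : ¬ Function.Injective g := by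
      intro hinj
      have := LinearMap.finrank_le_finrank_of_injective hinj
      rw [hVdim, hqrank] at this
      omega
    rw [← LinearMap.ker_eq_bot] at hginj
    obtain ⟨v, hv, hv0⟩ := Submodule.exists_mem_ne_zero_of_ne_bot hginj
    set ξ : (lp (fun _ : ℕ => ℂ) 2) := (v : (lp (fun _ : ℕ => ℂ) 2)) with hξ
    have hξ0 : ξ ≠ 0 := fun h => hv0 (Subtype.ext h)
    have hqξ : q ξ = 0 := by
      have := hv
      rw [LinearMap.mem_ker] at this
      have h2 := congrArg (Subtype.val) this
      simpa [hg] using h2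
    have hpξ : p ξ = ξ := by
      have hsub : V ≤ LinearMap.ker ((p : (lp (fun _ : ℕ => ℂ) 2) →ₗ[ℂ] (lp (fun _ : ℕ => ℂ) 2)) - LinearMap.id) := by
        rw [hV, Submodule.span_le]
        rintro _ ⟨j, rfl⟩
        rw [SetLike.mem_coe, LinearMap.mem_ker, LinearMap.sub_apply, LinearMap.id_apply]
        show p (η j) - η j = 0
        rw [hpη j, sub_self]
      have := hsub v.2
      rw [LinearMap.mem_ker, LinearMap.sub_apply, LinearMap.id_apply] at this
      have h2 : p ξ - ξ = 0 := this
      exact sub_eq_zero.mp h2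
    have hfinal : ‖ξ‖ ≤ ‖p - q‖ * ‖ξ‖ := by
      have h1 : (p - q) ξ = ξ := by
        rw [ContinuousLinearMap.sub_apply, hpξ, hqξ, sub_zero]
      calc ‖ξ‖ = ‖(p - q) ξ‖ := by rw [h1]
      _ ≤ ‖p - q‖ * ‖ξ‖ := (p - q).le_opNorm ξ
    have hξpos : 0 < ‖ξ‖ := norm_pos_iff.mpr hξ0
    nlinarith
  refine ⟨main d hdsa hφ, ⟨φ, fun T => ?_⟩, ?_⟩
  · exact (Commute.one_right (φ T)).smul_right _
  · -- sharpness
    have hsa2 : IsSelfAdjoint ((1 / 2 : ℂ) • (1 : (lp (fun _ : ℕ => ℂ) 2) →L[ℂ] (lp (fun _ : ℕ => ℂ) 2))) := by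
      rw [IsSelfAdjoint, star_smul, star_one]
      norm_num
    have hcomm2 : ∀ T, Commute (φ T) ((1 / 2 : ℂ) • (1 : (lp (fun _ : ℕ => ℂ) 2) →L[ℂ] (lp (fun _ : ℕ => ℂ) 2))) :=
      fun T => (Commute.one_right (φ T)).smul_right _
    have hge : 1 / 2 ≤ ‖(1 / 2 : ℂ) • (1 : (lp (fun _ : ℕ => ℂ) 2) →L[ℂ] (lp (fun _ : ℕ => ℂ) 2)) - q‖ := main _ hsa2 hcomm2
    have hle : ‖(1 / 2 : ℂ) • (1 : (lp (fun _ : ℕ => ℂ) 2) →L[ℂ] (lp (fun _ : ℕ => ℂ) 2)) - q‖ ≤ 1 / 2 := by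
      set v : (lp (fun _ : ℕ => ℂ) 2) →L[ℂ] (lp (fun _ : ℕ => ℂ) 2) := (1 / 2 : ℂ) • 1 - q with hv
      have hsq : v * v = (1 / 4 : ℂ) • 1 := by
        rw [hv]
        simp only [sub_mul, mul_sub, smul_mul_assoc, mul_smul_comm, one_mul, mul_one,
          smul_smul, hqidem.eq]
        match_scalars <;> norm_num
      have hnorm_sq : ‖v * v‖ = 1 / 4 := by
        rw [hsq, show ((1 / 4 : ℂ) • (1 : (lp (fun _ : ℕ => ℂ) 2) →L[ℂ] (lp (fun _ : ℕ => ℂ) 2)))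
            = algebraMap ℂ _ (1 / 4 : ℂ) from (Algebra.algebraMap_eq_smul_one _).symm,
          norm_algebraMap']
        simp
      have hstar : star v = v := by
        rw [hv, star_sub, star_smul, star_one, hqsa.star_eq]
        norm_num
      have hcs : ‖v‖ * ‖v‖ = ‖star v * v‖ := (CStarRing.norm_star_mul_self).symm
      rw [hstar, hnorm_sq] at hcs
      nlinarith [norm_nonneg v]
    linarith
end

section
/- Let M be a properly infinite von Neumann algebra, x ∈ M, and v ∈ M an isometry (v*v = 1). Then v*xv belongs to the σ-weak closure of the unitary orbit U(x) = {uxu* : u unitary in M}. -/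
open scoped InnerProductSpace
open Filter

section Aux

variable {H : Type*} [NormedAddCommGroup H] [InnerProductSpace ℂ H] [CompleteSpace H]

private lemma stmt12_inner_starmul_self (A : H →L[ℂ] H) (y : H) :
    ⟪(star A * A) y, y⟫_ℂ = ⟪A y, A y⟫_ℂ := by
  rw [ContinuousLinearMap.mul_apply, ContinuousLinearMap.star_eq_adjoint,
    ContinuousLinearMap.adjoint_inner_left]

private lemma stmt12_norm_app_eq {A B : H →L[ℂ] H} (h : star A * A = star B * B) (y : H) :
    ‖A y‖ = ‖B y‖ := by
  have h1 : (‖A y‖ : ℝ) ^ 2 = ‖B y‖ ^ 2 := by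
    rw [← inner_self_eq_norm_sq (𝕜 := ℂ), ← inner_self_eq_norm_sq (𝕜 := ℂ),
      ← stmt12_inner_starmul_self, ← stmt12_inner_starmul_self, h]
  nlinarith [norm_nonneg (A y), norm_nonneg (B y)]

private lemma stmt12_alg_aux (v w : H →L[ℂ] H) (hviso : star v * v = 1)
    (hw : star w * w = 1) :
    star (v * (1 - w * star w) + ((1 - v * star v) + v * w * star v) * star w) *
      (v * (1 - w * star w) + ((1 - v * star v) + v * w * star v) * star w) = 1 ∧
    (v * (1 - w * star w) + ((1 - v * star v) + v * w * star v) * star w) *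
      star (v * (1 - w * star w) + ((1 - v * star v) + v * w * star v) * star w) = 1 ∧
    star (((1 - v * star v) + v * w * star v) * star w) *
      (((1 - v * star v) + v * w * star v) * star w) = w * star w ∧
    star (w * star w) * (w * star w) = w * star w := by
  have hviso' : ∀ a : H →L[ℂ] H, star v * (v * a) = a := fun a => by
    rw [← mul_assoc, hviso, one_mul]
  have hw' : ∀ a : H →L[ℂ] H, star w * (w * a) = a := fun a => by
    rw [← mul_assoc, hw, one_mul]
  refine ⟨?_, ?_, ?_, ?_⟩ <;>
  · simp only [mul_sub, sub_mul, mul_add, add_mul, mul_one, one_mul, star_add, star_sub,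
      star_mul, star_star, star_one, mul_assoc, hviso, hw, hviso', hw']
    try abel

private lemma stmt12_proj_tendsto (w : ℕ → H →L[ℂ] H) (hw : ∀ i, star (w i) * w i = 1)
    (horth : ∀ i j, i ≠ j → star (w i) * w j = 0) (y : H) :
    Tendsto (fun n => (w n * star (w n)) y) atTop (nhds 0) := by
  set p : ℕ → H →L[ℂ] H := fun n => w n * star (w n) with hp
  have hpsa : ∀ i, star (p i) = p i := fun i => by simp [hp, star_mul, mul_assoc]
  have hpij : ∀ i j, p i * p j = if i = j then p i else 0 := by
    intro i j
    by_cases h : i = j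
    · subst h
      have h1 : star (w i) * (w i * star (w i)) = star (w i) := by
        rw [← mul_assoc, hw i, one_mul]
      simp [hp, mul_assoc, h1]
    · have h1 : star (w i) * (w j * star (w j)) = 0 := by
        rw [← mul_assoc, horth i j h, zero_mul]
      simp [hp, mul_assoc, h1, h]
  have hpi : ∀ i, star (p i) * p i = p i := by
    intro i; rw [hpsa i, hpij i i, if_pos rfl]
  have key : ∀ N : ℕ, ∑ i ∈ Finset.range N, ‖p i y‖ ^ 2 ≤ ‖y‖ ^ 2 := by
    intro N
    set P : H →L[ℂ] H := ∑ i ∈ Finset.range N, p i with hP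
    have hPP : star P * P = P := by
      rw [hP, star_sum]
      simp only [hpsa]
      rw [Finset.sum_mul_sum]
      refine Finset.sum_congr rfl fun i hi => ?_
      rw [Finset.sum_congr rfl fun j _ => hpij i j,
        Finset.sum_ite_eq (Finset.range N) i fun _ => p i]
      simp [hi]
    have h2 : ∀ i, (‖p i y‖ : ℝ) ^ 2 = RCLike.re ⟪p i y, y⟫_ℂ := by
      intro i
      rw [← inner_self_eq_norm_sq (𝕜 := ℂ), ← stmt12_inner_starmul_self, hpi i]
    have hPyy : ⟪P y, y⟫_ℂ = ∑ i ∈ Finset.range N, ⟪p i y, y⟫_ℂ := by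
      rw [hP, ContinuousLinearMap.sum_apply, sum_inner]
    have hPsq : (‖P y‖ : ℝ) ^ 2 = RCLike.re ⟪P y, y⟫_ℂ := by
      rw [← inner_self_eq_norm_sq (𝕜 := ℂ), ← stmt12_inner_starmul_self, hPP]
    have hcalc : ∑ i ∈ Finset.range N, ‖p i y‖ ^ 2 = (‖P y‖ : ℝ) ^ 2 := by
      rw [hPsq, hPyy, map_sum]
      exact Finset.sum_congr rfl fun i _ => h2 i
    rw [hcalc]
    have hb : (‖P y‖ : ℝ) ^ 2 ≤ ‖P y‖ * ‖y‖ := by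
      rw [hPsq]; exact re_inner_le_norm _ _
    nlinarith [norm_nonneg (P y), norm_nonneg y, sq_nonneg (‖P y‖ - ‖y‖)]
  have hsum : Summable fun n => ‖p n y‖ ^ 2 :=
    summable_of_sum_range_le (fun n => sq_nonneg _) key
  have h0 : Tendsto (fun n => ‖p n y‖ ^ 2) atTop (nhds 0) := hsum.tendsto_atTop_zero
  rw [tendsto_zero_iff_norm_tendsto_zero]
  have hs : Tendsto (fun n => Real.sqrt (‖p n y‖ ^ 2)) atTop (nhds (Real.sqrt 0)) :=
    (Real.continuous_sqrt.tendsto 0).comp h0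
  simpa [Real.sqrt_sq, norm_nonneg, hp] using hs

end Aux

/-- In a properly infinite von Neumann algebra `M` (encoded by the existence
of a sequence of isometries in `M` with mutually orthogonal ranges), for any `x ∈ M` and any
isometry `v ∈ M`, the compression `v* x v` lies in the σ-weak closure of the unitary orbit
`{u x u* : u unitary in M}` (the σ-weak closure of the bounded orbit coincides with its
closure in the weak operator topology). -/
theorem stmt12 {H : Type*} [NormedAddCommGroup H] [InnerProductSpace ℂ H] [CompleteSpace H]
    (M : VonNeumannAlgebra H)
    (hpi : ∃ w : ℕ → H →L[ℂ] H, (∀ i, w i ∈ M) ∧ (∀ i, star (w i) * w i = 1) ∧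
      ∀ i j, i ≠ j → star (w i) * w j = 0)
    (x : H →L[ℂ] H) (hx : x ∈ M)
    (v : H →L[ℂ] H) (hv : v ∈ M) (hviso : star v * v = 1) :
    (ContinuousLinearMapWOT.ofCLM : (H →L[ℂ] H) → H →WOT[ℂ] H) (star v * x * v) ∈
      closure ((ContinuousLinearMapWOT.ofCLM : (H →L[ℂ] H) → H →WOT[ℂ] H) ''
        {z : H →L[ℂ] H | ∃ u, u ∈ M ∧ star u * u = 1 ∧ u * star u = 1 ∧
          z = u * x * star u}) := by
  obtain ⟨w, hwM, hwiso, hworth⟩ := hpi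
  set p : ℕ → H →L[ℂ] H := fun n => w n * star (w n) with hp
  set s : ℕ → H →L[ℂ] H :=
    fun n => ((1 - v * star v) + v * w n * star v) * star (w n) with hs
  set u : ℕ → H →L[ℂ] H := fun n => v * (1 - p n) + s n with hu
  have halg := fun n => stmt12_alg_aux v (w n) hviso (hwiso n)
  have hu1 : ∀ n, star (u n) * u n = 1 := fun n => (halg n).1
  have hu2 : ∀ n, u n * star (u n) = 1 := fun n => (halg n).2.1
  have hss : ∀ n, star (s n) * s n = star (p n) * p n := fun n =>
    ((halg n).2.2.1).trans ((halg n).2.2.2).symm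
  have huM : ∀ n, u n ∈ M := by
    intro n
    refine add_mem (mul_mem hv (sub_mem (one_mem M)
      (mul_mem (hwM n) (star_mem (hwM n)))))
      (mul_mem (add_mem (sub_mem (one_mem M) (mul_mem hv (star_mem hv)))
        (mul_mem (mul_mem hv (hwM n)) (star_mem hv))) (star_mem (hwM n)))
  -- strong convergence u n y → v y
  have hvy : ∀ y : H, Tendsto (fun n => u n y) atTop (nhds (v y)) := by
    intro y
    have hpy := stmt12_proj_tendsto w hwiso hworth y
    have hpy' : Tendsto (fun n => ‖p n y‖) atTop (nhds 0) :=
      tendsto_zero_iff_norm_tendsto_zero.mp hpy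
    have hb : ∀ n, ‖u n y - v y‖ ≤ 2 * ‖p n y‖ := by
      intro n
      have hdiff : u n y - v y = s n y - v (p n y) := by
        simp only [hu, ContinuousLinearMap.add_apply, ContinuousLinearMap.mul_apply,
          ContinuousLinearMap.sub_apply, ContinuousLinearMap.one_apply, map_sub]
        abel
      have hsn : ‖s n y‖ = ‖p n y‖ := stmt12_norm_app_eq (hss n) y
      have hvn : ‖v (p n y)‖ = ‖p n y‖ := by
        have h1 : star v * v = star (1 : H →L[ℂ] H) * 1 := by simp [hviso]
        simpa using stmt12_norm_app_eq h1 (p n y)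
      calc ‖u n y - v y‖ = ‖s n y - v (p n y)‖ := by rw [hdiff]
        _ ≤ ‖s n y‖ + ‖v (p n y)‖ := norm_sub_le _ _
        _ = 2 * ‖p n y‖ := by rw [hsn, hvn]; ring
    have h2 : Tendsto (fun n => 2 * ‖p n y‖) atTop (nhds 0) := by
      simpa using hpy'.const_mul 2
    have h3 : Tendsto (fun n => u n y - v y) atTop (nhds 0) :=
      squeeze_zero_norm hb h2
    simpa using h3.add_const (v y)
  -- conclude
  refine mem_closure_of_tendsto (b := atTop)
    (f := fun n => (ContinuousLinearMapWOT.ofCLM : (H →L[ℂ] H) → H →WOT[ℂ] H) (star (u n) * x * u n)) ?_ ?_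
  · rw [ContinuousLinearMapWOT.tendsto_iff_forall_dual_apply_tendsto]
    intro y ℓ
    set a := (InnerProductSpace.toDual ℂ H).symm ℓ with ha
    have hℓ : ∀ z : H, ℓ z = ⟪a, z⟫_ℂ := fun z => InnerProductSpace.toDual_symm_apply.symm
    have hrw : ∀ (A : H →L[ℂ] H) (q : H), ⟪a, (star A) q⟫_ℂ = ⟪A a, q⟫_ℂ := by
      intro A q
      rw [ContinuousLinearMap.star_eq_adjoint, ContinuousLinearMap.adjoint_inner_right]
    simp only [ContinuousLinearMapWOT.ofCLM_apply, ContinuousLinearMap.mul_apply, hℓ, hrw]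
    exact (hvy a).inner ((x.continuous.tendsto (v y)).comp (hvy y))
  · refine Eventually.of_forall fun n => ?_
    refine ⟨star (u n) * x * u n, ⟨star (u n), star_mem (huM n), ?_, ?_, ?_⟩, rfl⟩
    · rw [star_star]; exact hu2 n
    · rw [star_star]; exact hu1 n
    · rw [star_star]
end

section
/- Let M be a von Neumann algebra and x ∈ M an element whose relative commutant W*(x)' ∩ M contains isometries v, w with vv* + ww* = 1 (in particular x is ℵ₀-divisible). Then for any unitaries u₁, u₂ ∈ M, the average (u₁ x u₁* + u₂ x u₂*)/2 belongs to the σ-weak closure of the unitary orbit of x. -/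
open scoped InnerProductSpace
open Filter Topology

section Stmt13Aux

variable {H : Type*} [NormedAddCommGroup H] [InnerProductSpace ℂ H] [CompleteSpace H]

lemma stmt13_isom_norm (A : H →L[ℂ] H) (h : star A * A = 1) (ξ : H) : ‖A ξ‖ = ‖ξ‖ := by
  have h1 : ⟪A ξ, A ξ⟫_ℂ = ⟪ξ, ξ⟫_ℂ := by
    rw [ContinuousLinearMap.star_eq_adjoint] at h
    calc ⟪A ξ, A ξ⟫_ℂ = ⟪ξ, ContinuousLinearMap.adjoint A (A ξ)⟫_ℂ :=
          (ContinuousLinearMap.adjoint_inner_right A ξ (A ξ)).symm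
      _ = ⟪ξ, (ContinuousLinearMap.adjoint A * A) ξ⟫_ℂ := rfl
      _ = ⟪ξ, ξ⟫_ℂ := by rw [h]; rfl
  have h3 : ‖A ξ‖ ^ 2 = ‖ξ‖ ^ 2 := by
    rw [← inner_self_eq_norm_sq (𝕜 := ℂ), ← inner_self_eq_norm_sq (𝕜 := ℂ), h1]
  calc ‖A ξ‖ = Real.sqrt (‖A ξ‖ ^ 2) := (Real.sqrt_sq (norm_nonneg _)).symm
    _ = Real.sqrt (‖ξ‖ ^ 2) := by rw [h3]
    _ = ‖ξ‖ := Real.sqrt_sq (norm_nonneg _)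

lemma stmt13_isom_opNorm (A : H →L[ℂ] H) (h : star A * A = 1) : ‖A‖ ≤ 1 :=
  A.opNorm_le_bound zero_le_one fun ξ => by rw [stmt13_isom_norm A h, one_mul]

lemma stmt13_bessel (ξ : H) (ζ : ℕ → H) (c : ℕ → ℝ) (hc : ∀ n, 0 ≤ c n)
    (hn : ∀ n, ‖ζ n‖ = c n) (hi : ∀ n, ⟪ζ n, ξ⟫_ℂ = ((c n ^ 2 : ℝ) : ℂ))
    (ho : ∀ m n, m ≠ n → ⟪ζ m, ζ n⟫_ℂ = 0) :
    Tendsto c atTop (𝓝 0) := by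
  have key : ∀ N : ℕ, ∑ i ∈ Finset.range N, c i ^ 2 ≤ ‖ξ‖ ^ 2 := by
    intro N
    set Z := ∑ i ∈ Finset.range N, ζ i with hZ
    set S := ∑ i ∈ Finset.range N, c i ^ 2 with hSdef
    have hS0 : 0 ≤ S := Finset.sum_nonneg fun i _ => sq_nonneg _
    have e1 : ⟪Z, Z⟫_ℂ = ∑ i ∈ Finset.range N, ⟪ζ i, ζ i⟫_ℂ := by
      rw [hZ, sum_inner]
      refine Finset.sum_congr rfl fun i hiN => ?_
      rw [inner_sum, Finset.sum_eq_single i]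
      · exact fun j _ hji => ho i j (Ne.symm hji)
      · intro hni; exact absurd hiN hni
    have hZnorm : ‖Z‖ ^ 2 = S := by
      rw [← inner_self_eq_norm_sq (𝕜 := ℂ), e1, RCLike.re_to_complex, Complex.re_sum, hSdef]
      refine Finset.sum_congr rfl fun i _ => ?_
      rw [← RCLike.re_to_complex, inner_self_eq_norm_sq (𝕜 := ℂ), hn i]
    have hSre : S = (⟪Z, ξ⟫_ℂ).re := by
      rw [hZ, sum_inner, Complex.re_sum, hSdef]
      refine Finset.sum_congr rfl fun i _ => ?_
      rw [hi i, Complex.ofReal_re]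
    have hCS : (⟪Z, ξ⟫_ℂ).re ≤ ‖Z‖ * ‖ξ‖ := by
      calc (⟪Z, ξ⟫_ℂ).re ≤ ‖⟪Z, ξ⟫_ℂ‖ := Complex.re_le_norm _
        _ ≤ ‖Z‖ * ‖ξ‖ := by simpa using norm_inner_le_norm (𝕜 := ℂ) Z ξ
    have hS1 : S ≤ ‖Z‖ * ‖ξ‖ := hSre ▸ hCS
    nlinarith [sq_nonneg (‖Z‖ - ‖ξ‖), norm_nonneg Z, norm_nonneg ξ]
  have hsum : Summable fun n => c n ^ 2 := summable_of_sum_range_le (fun n => sq_nonneg _) key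
  have h2 : Tendsto (fun n => c n ^ 2) atTop (𝓝 0) := hsum.tendsto_atTop_zero
  have h3 := (Real.continuous_sqrt.tendsto 0).comp h2
  have h4 : Tendsto (fun n => Real.sqrt (c n ^ 2)) atTop (𝓝 0) := by simpa [Function.comp_def] using h3
  have h5 : (fun n => Real.sqrt (c n ^ 2)) = c := funext fun n => Real.sqrt_sq (hc n)
  rwa [h5] at h4

lemma stmt13_unitary {A : Type*} [Ring A] [StarRing A] (V k : A)
    (hV : star V * V = 1) (hk : star k * k = 1) :
    star (V * (1 - k * star k) + (V * (k * (star V * star k)) + (1 - V * star V) * star k)) *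
        (V * (1 - k * star k) + (V * (k * (star V * star k)) + (1 - V * star V) * star k)) = 1 ∧
      (V * (1 - k * star k) + (V * (k * (star V * star k)) + (1 - V * star V) * star k)) *
        star (V * (1 - k * star k) + (V * (k * (star V * star k)) + (1 - V * star V) * star k)) =
        1 := by
  have cV : ∀ t : A, star V * (V * t) = t := fun t => by rw [← mul_assoc, hV, one_mul]
  have ck : ∀ t : A, star k * (k * t) = t := fun t => by rw [← mul_assoc, hk, one_mul]
  constructor <;>
  · simp only [star_add, star_mul, star_sub, star_one, star_star, mul_add, add_mul, mul_sub,
      sub_mul, mul_one, one_mul, mul_assoc, cV, ck, hV, hk]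
    noncomm_ring [mul_assoc, cV, ck, hV, hk]

lemma stmt13_inner_self (eta : H) : ⟪eta, eta⟫_ℂ = ((‖eta‖ ^ 2 : ℝ) : ℂ) := by
  apply Complex.ext
  · rw [Complex.ofReal_re, ← RCLike.re_to_complex, inner_self_eq_norm_sq (𝕜 := ℂ)]
  · rw [Complex.ofReal_im, ← RCLike.im_to_complex, inner_self_im (𝕜 := ℂ)]

end Stmt13Aux




set_option maxHeartbeats 1000000 in
/-- If `x ∈ M` and the relative commutant `W*(x)' ∩ M` contains isometries
`v, w` with `v v* + w w* = 1` (so `x` is `ℵ₀`-divisible), then for any unitaries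
`u₁, u₂ ∈ M` the average `(u₁ x u₁* + u₂ x u₂*)/2` lies in the σ-weak closure (= weak
operator closure, the orbit being bounded) of the unitary orbit of `x`. -/
theorem stmt13 {H : Type*} [NormedAddCommGroup H] [InnerProductSpace ℂ H] [CompleteSpace H]
    (M : VonNeumannAlgebra H)
    (x : H →L[ℂ] H) (hx : x ∈ M)
    (v w : H →L[ℂ] H) (hvM : v ∈ M) (hwM : w ∈ M)
    (hvx : Commute v x) (hvxs : Commute v (star x))
    (hwx : Commute w x) (hwxs : Commute w (star x))
    (hviso : star v * v = 1) (hwiso : star w * w = 1)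
    (hsum : v * star v + w * star w = 1)
    (u₁ u₂ : H →L[ℂ] H) (hu₁ : u₁ ∈ M) (hu₂ : u₂ ∈ M)
    (hu₁u : star u₁ * u₁ = 1 ∧ u₁ * star u₁ = 1)
    (hu₂u : star u₂ * u₂ = 1 ∧ u₂ * star u₂ = 1) :
    (ContinuousLinearMapWOT.ofCLM : (H →L[ℂ] H) → (H →WOT[ℂ] H))
        ((1 / 2 : ℂ) • (u₁ * x * star u₁ + u₂ * x * star u₂)) ∈
      closure ((ContinuousLinearMapWOT.ofCLM : (H →L[ℂ] H) → (H →WOT[ℂ] H)) ''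
        {z : H →L[ℂ] H | ∃ u, u ∈ M ∧ star u * u = 1 ∧ u * star u = 1 ∧
          z = u * x * star u}) := by
  -- orthogonality of the two isometries
  have hvw0 : star v * w = 0 := by
    have e2 : star v * w + star v * w = star v * w := by
      calc star v * w + star v * w
          = star v * v * (star v * w) + star v * (w * (star w * w)) := by
            rw [hviso, hwiso, one_mul, mul_one]
        _ = star v * ((v * star v + w * star w) * w) := by
            simp only [mul_add, add_mul, mul_assoc]
        _ = star v * w := by rw [hsum, one_mul]
    exact add_eq_left.mp e2
  have hwv0 : star w * v = 0 := by
    have := congrArg star hvw0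
    simpa [star_mul] using this
  -- commutation of x with the adjoints
  have hsvx : star v * x = x * star v := by
    have h := congrArg star hvxs.eq
    simpa [star_mul] using h.symm
  have hswx : star w * x = x * star w := by
    have h := congrArg star hwxs.eq
    simpa [star_mul] using h.symm
  -- continuation rewrite rules
  have cv1 : ∀ t : H →L[ℂ] H, star v * (v * t) = t := fun t => by
    rw [← mul_assoc, hviso, one_mul]
  have cw1 : ∀ t : H →L[ℂ] H, star w * (w * t) = t := fun t => by
    rw [← mul_assoc, hwiso, one_mul]
  have cvw : ∀ t : H →L[ℂ] H, star v * (w * t) = 0 := fun t => by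
    rw [← mul_assoc, hvw0, zero_mul]
  have cwv : ∀ t : H →L[ℂ] H, star w * (v * t) = 0 := fun t => by
    rw [← mul_assoc, hwv0, zero_mul]
  have cxv : ∀ t : H →L[ℂ] H, star v * (x * t) = x * (star v * t) := fun t => by
    rw [← mul_assoc, hsvx, mul_assoc]
  have cxw : ∀ t : H →L[ℂ] H, star w * (x * t) = x * (star w * t) := fun t => by
    rw [← mul_assoc, hswx, mul_assoc]
  -- the scalar 1/√2
  set σ : ℂ := (((Real.sqrt 2)⁻¹ : ℝ) : ℂ) with hσdef
  have hσs : star σ = σ := by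
    rw [hσdef]; exact Complex.conj_ofReal _
  have hσ2 : σ * σ = (1 / 2 : ℂ) := by
    rw [hσdef, ← Complex.ofReal_mul]
    rw [show ((Real.sqrt 2)⁻¹ * (Real.sqrt 2)⁻¹ : ℝ) = (Real.sqrt 2 * Real.sqrt 2)⁻¹ by
      rw [mul_inv]]
    rw [Real.mul_self_sqrt (by norm_num)]
    norm_num
  -- the isometry V with star V * x * V equal to the average
  set V : H →L[ℂ] H := σ • (v * star u₁ + w * star u₂) with hVdef
  have hVs : star V = σ • (u₁ * star v + u₂ * star w) := by
    rw [hVdef]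
    simp only [star_smul, star_add, star_mul, star_star, hσs]
  have hViso : star V * V = 1 := by
    rw [hVs, hVdef]
    simp only [smul_mul_assoc, mul_smul_comm, smul_smul, hσ2, mul_add, add_mul, mul_assoc,
      cv1, cw1, cvw, cwv, mul_zero, zero_mul, add_zero, zero_add, mul_one, hu₁u.2, hu₂u.2]
    rw [← smul_add, smul_smul, hσ2, smul_add, ← add_smul]
    norm_num
  have htarget : star V * (x * V) = (1 / 2 : ℂ) • (u₁ * x * star u₁ + u₂ * x * star u₂) := by
    rw [hVs, hVdef]
    simp only [smul_mul_assoc, mul_smul_comm, smul_smul, hσ2, mul_add, add_mul, mul_assoc,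
      cxv, cxw, cv1, cw1, cvw, cwv, mul_zero, zero_mul, add_zero, zero_add, mul_one]
    rw [← smul_add, smul_smul, hσ2]
  -- the sequence of isometries k n = v^n * w with pairwise orthogonal ranges
  set k : ℕ → (H →L[ℂ] H) := fun n => v ^ n * w with hkdef
  have hpow : ∀ (a : ℕ) (t : H →L[ℂ] H), star (v ^ a) * (v ^ a * t) = t := by
    intro a
    induction a with
    | zero => intro t; simp
    | succ a ih =>
      intro t
      have e : v ^ (a + 1) * t = v ^ a * (v * t) := by rw [pow_succ, mul_assoc]
      rw [e, pow_succ, star_mul, mul_assoc, ih (v * t), cv1]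
  have hkiso : ∀ n, star (k n) * k n = 1 := by
    intro n
    show star (v ^ n * w) * (v ^ n * w) = 1
    rw [star_mul, mul_assoc, hpow n w, hwiso]
  have hkcross : ∀ a j : ℕ, star (k a) * k (a + (j + 1)) = 0 := by
    intro a j
    show star (v ^ a * w) * (v ^ (a + (j + 1)) * w) = 0
    have e1 : v ^ (a + (j + 1)) * w = v ^ a * (v * (v ^ j * w)) := by
      rw [pow_add, pow_succ', mul_assoc, mul_assoc]
    rw [star_mul, mul_assoc, e1, hpow a (v * (v ^ j * w)), cwv]
  have hkorth : ∀ m n : ℕ, m ≠ n → star (k m) * k n = 0 := by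
    intro m n hmn
    rcases lt_or_gt_of_ne hmn with h | h
    · obtain ⟨j, rfl⟩ := Nat.exists_eq_add_of_lt h
      exact hkcross m j
    · obtain ⟨j, rfl⟩ := Nat.exists_eq_add_of_lt h
      have h0 : star (k n) * k (n + (j + 1)) = 0 := hkcross n j
      have h2 := congrArg star h0
      rw [star_mul, star_star, star_zero] at h2
      exact h2
  -- the approximating unitaries
  set S : ℕ → (H →L[ℂ] H) := fun n =>
    V * (1 - k n * star (k n)) + (V * (k n * (star V * star (k n))) + (1 - V * star V) * star (k n))
    with hSdef
  have hS1 : ∀ n, star (S n) * S n = 1 := fun n => (stmt13_unitary V (k n) hViso (hkiso n)).1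
  have hS2 : ∀ n, S n * star (S n) = 1 := fun n => (stmt13_unitary V (k n) hViso (hkiso n)).2
  have hdiff : ∀ n, S n - V = (V * (k n * star V) - V * k n + (1 - V * star V)) * star (k n) := by
    intro n
    rw [hSdef]
    simp only
    noncomm_ring
  -- membership in M
  have hVM : V ∈ M := by
    have h0 : v * star u₁ + w * star u₂ ∈ M :=
      add_mem (mul_mem hvM (star_mem hu₁)) (mul_mem hwM (star_mem hu₂))
    rw [hVdef]
    exact VonNeumannAlgebra.mem_carrier.mp
      (M.toStarSubalgebra.smul_mem (VonNeumannAlgebra.mem_carrier.mpr h0) σ)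
  have hkM : ∀ n, k n ∈ M := fun n => mul_mem (pow_mem hvM n) hwM
  have hSM : ∀ n, S n ∈ M := by
    intro n
    rw [hSdef]
    exact add_mem
      (mul_mem hVM (sub_mem (one_mem M) (mul_mem (hkM n) (star_mem (hkM n)))))
      (add_mem (mul_mem hVM (mul_mem (hkM n) (mul_mem (star_mem hVM) (star_mem (hkM n)))))
        (mul_mem (sub_mem (one_mem M) (mul_mem hVM (star_mem hVM))) (star_mem (hkM n))))
  -- operator norm bounds
  have hVn : ‖V‖ ≤ 1 := stmt13_isom_opNorm V hViso
  have hVsn : ‖star V‖ ≤ 1 := by rw [norm_star]; exact hVn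
  have hkn : ∀ n, ‖k n‖ ≤ 1 := fun n => stmt13_isom_opNorm (k n) (hkiso n)
  have hksn : ∀ n, ‖star (k n)‖ ≤ 1 := fun n => by rw [norm_star]; exact hkn n
  have hBn : ∀ n, ‖V * (k n * star V) - V * k n + (1 - V * star V)‖ ≤ 4 := by
    intro n
    have h1le : ‖(1 : H →L[ℂ] H)‖ ≤ 1 := ContinuousLinearMap.norm_id_le
    have h1 : ‖V * (k n * star V)‖ ≤ 1 :=
      le_trans (norm_mul_le _ _) <|
        mul_le_one₀ hVn (norm_nonneg _)
          (le_trans (norm_mul_le _ _) (mul_le_one₀ (hkn n) (norm_nonneg _) hVsn))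
    have h2 : ‖V * k n‖ ≤ 1 :=
      le_trans (norm_mul_le _ _) (mul_le_one₀ hVn (norm_nonneg _) (hkn n))
    have hVV : ‖V * star V‖ ≤ 1 :=
      le_trans (norm_mul_le _ _) (mul_le_one₀ hVn (norm_nonneg _) hVsn)
    have h3 : ‖(1 : H →L[ℂ] H) - V * star V‖ ≤ 2 := by
      calc ‖(1 : H →L[ℂ] H) - V * star V‖ ≤ ‖(1 : H →L[ℂ] H)‖ + ‖V * star V‖ := norm_sub_le _ _
        _ ≤ 1 + 1 := add_le_add h1le hVV
        _ = 2 := by norm_num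
    calc ‖V * (k n * star V) - V * k n + (1 - V * star V)‖
        ≤ ‖V * (k n * star V) - V * k n‖ + ‖(1 : H →L[ℂ] H) - V * star V‖ := norm_add_le _ _
      _ ≤ (‖V * (k n * star V)‖ + ‖V * k n‖) + ‖(1 : H →L[ℂ] H) - V * star V‖ :=
          add_le_add (norm_sub_le _ _) le_rfl
      _ ≤ (1 + 1) + 2 := add_le_add (add_le_add h1 h2) h3
      _ = 4 := by norm_num
  -- SOT convergence of star (k n) to 0
  have hkSOT : ∀ ξ : H, Tendsto (fun n => ‖(star (k n)) ξ‖) atTop (𝓝 0) := by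
    intro ξ
    have hadj : ∀ (n : ℕ) (a b : H), ⟪(k n) a, b⟫_ℂ = ⟪a, (star (k n)) b⟫_ℂ := by
      intro n a b
      have hk' : k n = ContinuousLinearMap.adjoint (star (k n)) := by
        rw [← ContinuousLinearMap.star_eq_adjoint, star_star]
      conv_lhs => rw [hk']
      exact ContinuousLinearMap.adjoint_inner_left (star (k n)) b a
    refine stmt13_bessel ξ (fun n => (k n) ((star (k n)) ξ)) (fun n => ‖(star (k n)) ξ‖)
      (fun n => norm_nonneg _) (fun n => stmt13_isom_norm (k n) (hkiso n) _) ?_ ?_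
    · intro n
      rw [hadj n ((star (k n)) ξ) ξ]
      exact stmt13_inner_self ((star (k n)) ξ)
    · intro a b hab
      rw [hadj a ((star (k a)) ξ) ((k b) ((star (k b)) ξ))]
      have : (star (k a)) ((k b) ((star (k b)) ξ)) = ((star (k a) * k b)) ((star (k b)) ξ) := rfl
      rw [this, hkorth a b hab]
      simp
  -- pointwise (SOT) convergence of S n to V
  have hStend : ∀ ξ : H, Tendsto (fun n => (S n) ξ) atTop (𝓝 (V ξ)) := by
    intro ξ
    rw [tendsto_iff_norm_sub_tendsto_zero]
    have hb : ∀ n, ‖(S n) ξ - V ξ‖ ≤ 4 * ‖(star (k n)) ξ‖ := by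
      intro n
      have e : (S n) ξ - V ξ
          = ((V * (k n * star V) - V * k n + (1 - V * star V)) * star (k n)) ξ := by
        rw [← hdiff n]; rfl
      rw [e]
      calc ‖((V * (k n * star V) - V * k n + (1 - V * star V)) * star (k n)) ξ‖
          = ‖(V * (k n * star V) - V * k n + (1 - V * star V)) ((star (k n)) ξ)‖ := rfl
        _ ≤ ‖V * (k n * star V) - V * k n + (1 - V * star V)‖ * ‖(star (k n)) ξ‖ :=
            ContinuousLinearMap.le_opNorm _ _
        _ ≤ 4 * ‖(star (k n)) ξ‖ := mul_le_mul_of_nonneg_right (hBn n) (norm_nonneg _)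
    have h4 : Tendsto (fun n => 4 * ‖(star (k n)) ξ‖) atTop (𝓝 0) := by
      have := (hkSOT ξ).const_mul (4 : ℝ)
      simpa using this
    exact squeeze_zero (fun n => norm_nonneg _) hb h4
  -- moving stars across the inner product
  have hadjS : ∀ (A : H →L[ℂ] H) (a b : H), ⟪a, (star A) b⟫_ℂ = ⟪A a, b⟫_ℂ := by
    intro A a b
    rw [ContinuousLinearMap.star_eq_adjoint]
    exact ContinuousLinearMap.adjoint_inner_right A a b
  -- final assembly
  refine mem_closure_of_tendsto (b := (atTop : Filter ℕ)) (f := fun n =>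
      (ContinuousLinearMapWOT.ofCLM : (H →L[ℂ] H) → (H →WOT[ℂ] H)) (star (S n) * x * S n)) ?_ ?_
  · rw [ContinuousLinearMapWOT.tendsto_iff_forall_dual_apply_tendsto]
    intro ξ y
    have hy : ∀ z : H, y z = ⟪(InnerProductSpace.toDual ℂ H).symm y, z⟫_ℂ := by
      intro z
      rw [← InnerProductSpace.toDual_apply_apply, (InnerProductSpace.toDual ℂ H).apply_symm_apply y]
    set η := (InnerProductSpace.toDual ℂ H).symm y with hηdef
    have e1 : ∀ n, y (((ContinuousLinearMapWOT.ofCLM : (H →L[ℂ] H) → (H →WOT[ℂ] H)) (star (S n) * x * S n)) ξ)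
        = ⟪(S n) η, x ((S n) ξ)⟫_ℂ := by
      intro n
      rw [ContinuousLinearMap.toWOT_apply, hy]
      have e0 : (star (S n) * x * S n) ξ = (star (S n)) (x ((S n) ξ)) := rfl
      rw [e0, hadjS (S n) η (x ((S n) ξ))]
    have e2 : y (((ContinuousLinearMapWOT.ofCLM : (H →L[ℂ] H) → (H →WOT[ℂ] H))
          ((1 / 2 : ℂ) • (u₁ * x * star u₁ + u₂ * x * star u₂))) ξ)
        = ⟪V η, x (V ξ)⟫_ℂ := by
      rw [ContinuousLinearMap.toWOT_apply, hy, ← htarget]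
      have e0 : (star V * (x * V)) ξ = (star V) (x (V ξ)) := rfl
      rw [e0, hadjS V η (x (V ξ))]
    simp only [e1, e2]
    exact (hStend η).inner ((x.continuous.tendsto (V ξ)).comp (hStend ξ))
  · refine Eventually.of_forall fun n => ?_
    refine ⟨star (S n) * x * S n, ⟨star (S n), star_mem (hSM n), ?_, ?_, ?_⟩, rfl⟩
    · rw [star_star]; exact hS2 n
    · rw [star_star]; exact hS1 n
    · rw [star_star]
end
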